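/- arXiv:2111.12638 — 14 statements merged into one kernel-verified Lean document; each statement's English description precedes it below -/
import Mathlib

section
/- Let N > 0, L > 0, R ≥ 0, set T = 2·√(N/L), and consider the finite-difference differentiator with output y(t) = (u(t) − u(t − T))/T for t ≥ T (and y(t) = 0 for t < T), applied to inputs u = f + η. Then for every τ ≥ T, the worst-case differentiation error sup over f ∈ F_L^R, η ∈ E_N, and times t ≥ τ of |ḟ(t) − y(t)| equals exactly 2·√(N·L). -/
open Set Filter Topology

/-- `f ∈ F_L`: `f : [0,∞) → ℝ` is differentiable with derivative `f'`
that is Lipschitz continuous with constant `L` on `[0,∞)`. -/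
def IsFL (L : ℝ) (f f' : ℝ → ℝ) : Prop :=
  (∀ t ∈ Set.Ici (0:ℝ), HasDerivWithinAt f (f' t) (Set.Ici 0) t) ∧
  ∀ s ∈ Set.Ici (0:ℝ), ∀ t ∈ Set.Ici (0:ℝ), |f' s - f' t| ≤ L * |s - t|

/-- `η ∈ E_N`: measurable noise bounded by `N` on `[0,∞)`. -/
def IsEN (N : ℝ) (η : ℝ → ℝ) : Prop :=
  Measurable η ∧ ∀ t ∈ Set.Ici (0:ℝ), |η t| ≤ N

/-- `f ∈ F_L^R`: member of `F_L` with `|f(0)| ≤ R` and `|ḟ(0)| ≤ R`. -/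
def IsFLR (L R : ℝ) (f f' : ℝ → ℝ) : Prop :=
  IsFL L f f' ∧ |f 0| ≤ R ∧ |f' 0| ≤ R

/-- A differentiator is causal if its output at time `T` depends only on the
input on `[0, T]`. -/
def Causal (D : (ℝ → ℝ) → ℝ → ℝ) : Prop :=
  ∀ u₁ u₂ T, (∀ t ∈ Set.Icc (0:ℝ) T, u₁ t = u₂ t) → D u₁ T = D u₂ T

/-!
The error of the difference quotient over a window `T` splits into a Taylor remainder,
at most `L T / 2` since `ḟ` is `L`-Lipschitz, and a noise term, at most `2 N / T`.
Both bounds are attained at once by a parabola whose derivative falls with slope `L`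
on the window and by noise jumping from `-N` to `N` at its right end.
At `T = 2 √(N / L)`, which minimises `L T / 2 + 2 N / T`, that sum is `2 √(N L)`.
-/

namespace IsFL

variable {L : ℝ} {f f' : ℝ → ℝ}

theorem abs_sub_sub_mul_deriv_le (hf : IsFL L f f') {s t : ℝ} (hs : 0 ≤ s) (hst : s ≤ t) :
    |f t - f s - (t - s) * f' t| ≤ L * (t - s) ^ 2 / 2 := by
  have hsub : Icc s t ⊆ Ici 0 := fun x hx => hs.trans hx.1
  set g : ℝ → ℝ := fun x => f x - f s - (x - s) * f' t
  have hg_cont : ContinuousOn g (Icc s t) := by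
    refine ContinuousOn.sub (ContinuousOn.sub ?_ continuousOn_const) (by fun_prop)
    exact fun x hx => ((hf.1 x (hsub hx)).continuousWithinAt).mono hsub
  have hg_deriv : ∀ x ∈ Ico s t, HasDerivWithinAt g (f' x - f' t) (Ici x) x := by
    intro x hx
    have hx0 : 0 ≤ x := hs.trans hx.1
    have hlin : HasDerivWithinAt (fun y => (y - s) * f' t) (f' t) (Ici x) x := by
      simpa using ((hasDerivWithinAt_id x (Ici x)).sub_const s).mul_const (f' t)
    exact (((hf.1 x hx0).mono (Ici_subset_Ici.2 hx0)).sub_const (f s)).sub hlin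
  have hB : ∀ x, HasDerivAt (fun y => L * ((t - s) ^ 2 - (t - y) ^ 2) / 2) (L * (t - x)) x := by
    intro x
    have hsq : HasDerivAt (fun y : ℝ => (t - y) ^ 2) (-(2 * (t - x))) x := by
      simpa using ((hasDerivAt_id x).const_sub t).fun_pow 2
    exact (((hsq.const_sub _).const_mul L).div_const 2).congr_deriv (by ring)
  have hbound : ∀ x ∈ Ico s t, ‖f' x - f' t‖ ≤ L * (t - x) := by
    intro x hx
    calc ‖f' x - f' t‖ = |f' x - f' t| := Real.norm_eq_abs _
      _ ≤ L * |x - t| := hf.2 x (hs.trans hx.1) t (hs.trans hst)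
      _ = L * (t - x) := by rw [abs_sub_comm, abs_of_nonneg (by linarith [hx.2])]
  have hgs : ‖g s‖ ≤ L * ((t - s) ^ 2 - (t - s) ^ 2) / 2 := by simp [g]
  simpa [g] using image_norm_le_of_norm_deriv_right_le_deriv_boundary hg_cont hg_deriv hgs hB
    hbound ⟨hst, le_rfl⟩

theorem abs_deriv_sub_diffQuot_le {N T t : ℝ} {η : ℝ → ℝ} (hf : IsFL L f f')
    (hη : ∀ s ∈ Ici (0:ℝ), |η s| ≤ N) (hT : 0 < T) (ht : T ≤ t) :
    |f' t - ((f + η) t - (f + η) (t - T)) / T| ≤ L * T / 2 + 2 * N / T := by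
  have htaylor := hf.abs_sub_sub_mul_deriv_le (s := t - T) (by linarith) (by linarith)
  rw [sub_sub_cancel] at htaylor
  have hsplit : f' t - ((f + η) t - (f + η) (t - T)) / T =
      -((f t - f (t - T) - T * f' t) + (η t - η (t - T))) / T := by
    simp only [Pi.add_apply]
    field_simp
    ring
  calc |f' t - ((f + η) t - (f + η) (t - T)) / T|
      = |(f t - f (t - T) - T * f' t) + (η t - η (t - T))| / T := by
        rw [hsplit, abs_div, abs_neg, abs_of_pos hT]
    _ ≤ (L * T ^ 2 / 2 + (N + N)) / T := by
        gcongr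
        refine (abs_add_le _ _).trans (add_le_add htaylor ((abs_sub _ _).trans ?_))
        exact add_le_add (hη t (mem_Ici.2 (by linarith))) (hη (t - T) (mem_Ici.2 (by linarith)))
    _ = L * T / 2 + 2 * N / T := by
        field_simp
        ring

end IsFL

theorem isFL_integral {L : ℝ} {g : ℝ → ℝ} (hg : Continuous g)
    (hlip : ∀ s u, |g s - g u| ≤ L * |s - u|) : IsFL L (fun s => ∫ x in (0:ℝ)..s, g x) g :=
  ⟨fun s _ => (hg.integral_hasStrictDerivAt 0 s).hasDerivAt.hasDerivWithinAt,
    fun s _ u _ => hlip s u⟩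

theorem optimal_window_error {L N : ℝ} (hL : 0 < L) (hN : 0 < N) :
    L * (2 * √(N / L)) / 2 + 2 * N / (2 * √(N / L)) = 2 * √(N * L) := by
  have hsN : 0 < √N := Real.sqrt_pos.2 hN
  have hsL : 0 < √L := Real.sqrt_pos.2 hL
  rw [Real.sqrt_div hN.le, Real.sqrt_mul hN.le]
  field_simp
  nlinarith [Real.sq_sqrt hN.le, Real.sq_sqrt hL.le]

theorem exists_isFLR_isEN_abs_deriv_sub_diffQuot_eq {L N R T t : ℝ} (hL : 0 ≤ L) (hN : 0 ≤ N)
    (hR : 0 ≤ R) (hT : 0 < T) (ht : T ≤ t) :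
    ∃ f f' η : ℝ → ℝ, IsFLR L R f f' ∧ IsEN N η ∧
      |f' t - ((f + η) t - (f + η) (t - T)) / T| = L * T / 2 + 2 * N / T := by
  set g : ℝ → ℝ := fun s => -L * max (s - (t - T)) 0
  set f : ℝ → ℝ := fun s => ∫ x in (0:ℝ)..s, g x
  set η : ℝ → ℝ := fun s => if s < t then -N else N
  have hg : Continuous g := by fun_prop
  have hlip : ∀ s u, |g s - g u| ≤ L * |s - u| := fun s u => by
    rw [← mul_sub, abs_mul, abs_neg, abs_of_nonneg hL]
    exact mul_le_mul_of_nonneg_left ((abs_max_sub_max_le_abs _ _ _).trans_eq (by ring_nf)) hL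
  have hg0 : g 0 = 0 := by simp [g, ht]
  have hgt : g t = -L * T := by simp [g, hT.le]
  have hη : IsEN N η := by
    refine ⟨Measurable.ite measurableSet_Iio measurable_const measurable_const, fun s _ => ?_⟩
    simp only [η]
    split_ifs <;> simp [abs_of_nonneg hN]
  have hdiff : f t - f (t - T) = -(L * T ^ 2 / 2) := by
    rw [intervalIntegral.integral_interval_sub_left (hg.intervalIntegrable _ _)
      (hg.intervalIntegrable _ _)]
    have hramp : EqOn g (fun x => -L * (x - (t - T))) (uIcc (t - T) t) := fun x hx => by
      rw [uIcc_of_le (by linarith)] at hx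
      simp [g, max_eq_left (sub_nonneg.2 hx.1)]
    rw [intervalIntegral.integral_congr hramp,
      intervalIntegral.integral_comp_sub_right (fun x => -L * x), sub_self, sub_sub_cancel,
      intervalIntegral.integral_const_mul, integral_id]
    ring
  refine ⟨f, g, η, ⟨isFL_integral hg hlip, by simpa [f], by simpa [hg0]⟩, hη, ?_⟩
  have hval : g t - ((f + η) t - (f + η) (t - T)) / T = -(L * T / 2 + 2 * N / T) := by
    simp only [Pi.add_apply, η, lt_irrefl, if_false, show t - T < t by linarith, if_true]
    rw [hgt, show ∀ a b : ℝ, a + N - (b + -N) = (a - b) + 2 * N by intros; ring, hdiff]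
    field_simp
    ring
  rw [hval, abs_neg, abs_of_nonneg (by positivity)]

theorem stmt2 (L N R : ℝ) (hL : 0 < L) (hN : 0 < N) (hR : 0 ≤ R)
    (T : ℝ) (hT : T = 2 * Real.sqrt (N / L))
    (y : (ℝ → ℝ) → ℝ → ℝ)
    (hy : ∀ u t, y u t = if T ≤ t then (u t - u (t - T)) / T else 0)
    (τ : ℝ) (hτ : T ≤ τ) :
    sSup { e : ℝ | ∃ (f f' η : ℝ → ℝ) (t : ℝ), IsFLR L R f f' ∧ IsEN N η ∧
        τ ≤ t ∧ e = |f' t - y (f + η) t| } = 2 * Real.sqrt (N * L) := by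
  have hT0 : 0 < T := by rw [hT]; positivity
  rw [← optimal_window_error hL hN, ← hT]
  refine IsGreatest.csSup_eq ⟨?_, ?_⟩
  · obtain ⟨f, f', η, hf, hη, herr⟩ :=
      exists_isFLR_isEN_abs_deriv_sub_diffQuot_eq hL.le hN.le hR hT0 hτ
    exact ⟨f, f', η, τ, hf, hη, le_rfl, by rw [hy, if_pos hτ, herr]⟩
  · rintro e ⟨f, f', η, t, ⟨hf, -⟩, ⟨-, hη⟩, hτt, rfl⟩
    rw [hy, if_pos (hτ.trans hτt)]
    exact hf.abs_deriv_sub_diffQuot_le hη hT0 (hτ.trans hτt)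
end

section
/- Let D be a causal differentiator and let L, N, R, τ ≥ 0. Then there exist f ∈ F_L^R, a noise η ∈ E_N, and a time t ≥ τ such that |ḟ(t) − [D(f + η)](t)| ≥ 2·√(N·L). In particular, the worst-case differentiation error of D from time τ over the class F_L^R with noise bound N is at least 2·√(N·L). -/
open Set Filter Topology

/-! The input `0` is consistent both with `f` under noise `-f` and with `-f` under noise `f`
whenever `|f| ≤ N` on `[0, t]`, so by causality `D` returns the same value at `t` in both cases
and misses one of `±ḟ(t)` by at least `|ḟ(t)|`. The extremal `f` vanishes up to `τ`, has
`f̈ = -L` on `[τ, τ + a]` and `f̈ = L` afterwards, where `a = √(N/L)`: it descends to `-N` at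
`τ + 2a` and climbs back to `N` at `τ + 4a`, arriving with slope `2La = 2√(NL)`. -/

lemma hasDerivAt_max_zero_sq (x : ℝ) :
    HasDerivAt (fun y : ℝ => max y 0 ^ 2) (2 * max x 0) x := by
  rcases lt_trichotomy x 0 with hx | rfl | hx
  · have hzero : (fun y : ℝ => max y 0 ^ 2) =ᶠ[𝓝 x] fun _ => 0 := by
      filter_upwards [Iio_mem_nhds hx] with y hy
      simp [max_eq_right ((mem_Iio.1 hy).le)]
    simpa [max_eq_right hx.le] using (hasDerivAt_const x (0 : ℝ)).congr_of_eventuallyEq hzero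
  · have hO : (fun y : ℝ => max y 0 ^ 2) =O[𝓝 0] fun y => ‖y - 0‖ ^ 2 :=
      Asymptotics.IsBigO.of_bound 1 <| Eventually.of_forall fun y => by
        rcases le_total y 0 with hy | hy <;> simp [hy, sq_nonneg]
    simpa using (hO.hasFDerivAt one_lt_two).hasDerivAt
  · have hsq : (fun y : ℝ => max y 0 ^ 2) =ᶠ[𝓝 x] fun y => y ^ 2 := by
      filter_upwards [Ioi_mem_nhds hx] with y hy
      simp [max_eq_left ((mem_Ioi.1 hy).le)]
    simpa [max_eq_left hx.le] using (hasDerivAt_pow 2 x).congr_of_eventuallyEq hsq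

noncomputable section Extremal

variable (L τ a : ℝ)

def extremalSignal (s : ℝ) : ℝ :=
  L * (max (s - (τ + a)) 0 ^ 2 - max (s - τ) 0 ^ 2 / 2)

/-- This is `L * (2 * max (s - (τ + a)) 0 - max (s - τ) 0)`, written so that its
`L`-Lipschitz continuity is visible. -/
def extremalSignalDeriv (s : ℝ) : ℝ :=
  L * (|max (s - τ) 0 - a| - a)

variable {L τ a}

lemma extremalSignal_of_le {s : ℝ} (hs : s ≤ τ) (ha : 0 ≤ a) : extremalSignal L τ a s = 0 := by
  simp [extremalSignal, max_eq_right (sub_nonpos.2 hs),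
    max_eq_right (by linarith : s - (τ + a) ≤ 0)]

lemma extremalSignalDeriv_of_le {s : ℝ} (hs : s ≤ τ) (ha : 0 ≤ a) :
    extremalSignalDeriv L τ a s = 0 := by
  simp [extremalSignalDeriv, max_eq_right (sub_nonpos.2 hs), abs_of_nonneg ha]

lemma hasDerivAt_extremalSignal (ha : 0 ≤ a) (s : ℝ) :
    HasDerivAt (extremalSignal L τ a) (extremalSignalDeriv L τ a s) s := by
  have hshift (c : ℝ) : HasDerivAt (fun y : ℝ => max (y - c) 0 ^ 2) (2 * max (s - c) 0) s :=
    (hasDerivAt_max_zero_sq (s - c)).comp_sub_const s c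
  refine (((hshift (τ + a)).sub ((hshift τ).div_const 2)).const_mul L).congr_deriv ?_
  rcases le_total s τ with h | h
  · rw [extremalSignalDeriv_of_le h ha, max_eq_right (sub_nonpos.2 h),
      max_eq_right (by linarith : s - (τ + a) ≤ 0)]
    ring
  unfold extremalSignalDeriv
  rcases le_total s (τ + a) with h' | h'
  · rw [max_eq_left (sub_nonneg.2 h), max_eq_right (by linarith),
      abs_of_nonpos (by linarith)]
    ring
  · rw [max_eq_left (sub_nonneg.2 h), max_eq_left (by linarith), abs_of_nonneg (by linarith)]
    ring

lemma abs_extremalSignalDeriv_sub_le (hL : 0 ≤ L) (s u : ℝ) :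
    |extremalSignalDeriv L τ a s - extremalSignalDeriv L τ a u| ≤ L * |s - u| := by
  unfold extremalSignalDeriv
  rw [← mul_sub, abs_mul, abs_of_nonneg hL, sub_sub_sub_cancel_right]
  gcongr L * ?_
  calc |(|max (s - τ) 0 - a| - |max (u - τ) 0 - a|)|
      ≤ |max (s - τ) 0 - max (u - τ) 0| := by
        simpa using abs_abs_sub_abs_le_abs_sub (max (s - τ) 0 - a) (max (u - τ) 0 - a)
    _ ≤ |s - u| := by simpa using abs_max_sub_max_le_abs (s - τ) (u - τ) 0

lemma isFLR_extremalSignal (hL : 0 ≤ L) (hτ : 0 ≤ τ) (ha : 0 ≤ a) {R : ℝ} (hR : 0 ≤ R) :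
    IsFLR L R (extremalSignal L τ a) (extremalSignalDeriv L τ a) := by
  refine ⟨⟨fun s _ => (hasDerivAt_extremalSignal ha s).hasDerivWithinAt,
    fun s _ u _ => abs_extremalSignalDeriv_sub_le hL s u⟩, ?_, ?_⟩
  · simpa [extremalSignal_of_le hτ ha] using hR
  · simpa [extremalSignalDeriv_of_le hτ ha] using hR

lemma abs_extremalSignal_le (hL : 0 ≤ L) (ha : 0 ≤ a) {s : ℝ} (hs : s ≤ τ + 4 * a) :
    |extremalSignal L τ a s| ≤ L * a ^ 2 := by
  rcases le_total s τ with h | h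
  · rw [extremalSignal_of_le h ha, abs_zero]
    positivity
  unfold extremalSignal
  rw [abs_mul, abs_of_nonneg hL]
  gcongr
  rw [abs_le]
  rcases le_total s (τ + a) with h' | h'
  · rw [max_eq_left (sub_nonneg.2 h), max_eq_right (by linarith)]
    constructor <;> nlinarith
  · rw [max_eq_left (sub_nonneg.2 h), max_eq_left (by linarith)]
    -- here the signal is `L * ((s - τ - 2a)² / 2 - a²)`
    constructor <;> nlinarith [sq_nonneg (s - τ - 2 * a)]

lemma extremalSignalDeriv_add_four_mul (ha : 0 ≤ a) :
    extremalSignalDeriv L τ a (τ + 4 * a) = 2 * L * a := by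
  rw [extremalSignalDeriv, add_sub_cancel_left, max_eq_left (by positivity),
    abs_of_nonneg (by linarith)]
  ring

end Extremal

lemma IsFLR.neg {L R : ℝ} {f f' : ℝ → ℝ} (hf : IsFLR L R f f') : IsFLR L R (-f) (-f') := by
  obtain ⟨⟨hderiv, hlip⟩, h0, h0'⟩ := hf
  refine ⟨⟨fun t ht => (hderiv t ht).neg, fun s hs t ht => ?_⟩, by simpa using h0,
    by simpa using h0'⟩
  rw [Pi.neg_apply, Pi.neg_apply, neg_sub_neg, abs_sub_comm]
  exact hlip s hs t ht

lemma exists_isEN_add_eq_zero {f : ℝ → ℝ} (hf : Continuous f) {N t : ℝ} (hN : 0 ≤ N)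
    (hbound : ∀ s ∈ Icc 0 t, |f s| ≤ N) :
    ∃ η, IsEN N η ∧ ∀ s ∈ Icc 0 t, (f + η) s = 0 := by
  refine ⟨(Iic t).indicator (-f), ⟨hf.measurable.neg.indicator measurableSet_Iic, ?_⟩, ?_⟩
  · intro s hs
    by_cases hst : s ≤ t
    · simpa [indicator_of_mem (mem_Iic.2 hst)] using hbound s ⟨hs, hst⟩
    · simpa [indicator_of_notMem (mt mem_Iic.1 hst)] using hN
  · intro s hs
    simp [indicator_of_mem (mem_Iic.2 hs.2)]

lemma Causal.le_max_abs_sub {D : (ℝ → ℝ) → ℝ → ℝ} (hD : Causal D) {u₁ u₂ : ℝ → ℝ} {t : ℝ}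
    (h : ∀ s ∈ Icc 0 t, u₁ s = u₂ s) (b₁ b₂ : ℝ) :
    |b₁ - b₂| ≤ 2 * max |b₁ - D u₁ t| |b₂ - D u₂ t| := by
  rw [hD u₁ u₂ t h]
  calc |b₁ - b₂| = |(b₁ - D u₂ t) - (b₂ - D u₂ t)| := by rw [sub_sub_sub_cancel_right]
    _ ≤ |b₁ - D u₂ t| + |b₂ - D u₂ t| := abs_sub _ _
    _ ≤ 2 * max |b₁ - D u₂ t| |b₂ - D u₂ t| := by
        rw [two_mul]
        exact add_le_add (le_max_left _ _) (le_max_right _ _)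

lemma mul_sqrt_div_eq_sqrt_mul {L N : ℝ} (hL : 0 ≤ L) :
    L * √(N / L) = √(N * L) := by
  rcases hL.eq_or_lt with rfl | hL
  · simp
  rw [← Real.sqrt_sq hL.le, ← Real.sqrt_mul (sq_nonneg L), Real.sqrt_sq hL.le]
  congr 1
  field_simp

lemma mul_sq_sqrt_div_le {L N : ℝ} (hL : 0 ≤ L) (hN : 0 ≤ N) : L * √(N / L) ^ 2 ≤ N := by
  rw [Real.sq_sqrt (div_nonneg hN hL)]
  rcases hL.eq_or_lt with rfl | hL
  · simpa using hN
  · exact (mul_div_cancel₀ N hL.ne').le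

theorem stmt3 (D : (ℝ → ℝ) → ℝ → ℝ) (hD : Causal D)
    (L N R τ : ℝ) (hL : 0 ≤ L) (hN : 0 ≤ N) (hR : 0 ≤ R) (hτ : 0 ≤ τ) :
    ∃ (f f' η : ℝ → ℝ) (t : ℝ), IsFLR L R f f' ∧ IsEN N η ∧ τ ≤ t ∧
      2 * Real.sqrt (N * L) ≤ |f' t - D (f + η) t| := by
  set a := √(N / L)
  have ha : 0 ≤ a := Real.sqrt_nonneg _
  set f := extremalSignal L τ a
  set f' := extremalSignalDeriv L τ a
  set t := τ + 4 * a
  have hf : IsFLR L R f f' := isFLR_extremalSignal hL hτ ha hR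
  have hbound : ∀ s ∈ Icc 0 t, |f s| ≤ N := fun s hs =>
    (abs_extremalSignal_le hL ha hs.2).trans (mul_sq_sqrt_div_le hL hN)
  have hcont : Continuous f := by unfold f extremalSignal; fun_prop
  obtain ⟨η₁, hη₁, h₁⟩ := exists_isEN_add_eq_zero hcont hN hbound
  obtain ⟨η₂, hη₂, h₂⟩ := exists_isEN_add_eq_zero hcont.neg hN (by simpa using hbound)
  have key := hD.le_max_abs_sub (fun s hs => (h₁ s hs).trans (h₂ s hs).symm) (f' t) (-f' t)
  have hslope : |f' t - -f' t| = 2 * (2 * √(N * L)) := by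
    rw [sub_neg_eq_add, show f' t = 2 * L * a from extremalSignalDeriv_add_four_mul ha,
      ← mul_sqrt_div_eq_sqrt_mul hL, abs_of_nonneg (by positivity)]
    ring
  rcases le_max_iff.1 (le_of_mul_le_mul_left (hslope ▸ key) two_pos) with h | h
  · exact ⟨f, f', η₁, t, hf, hη₁, by linarith, h⟩
  · exact ⟨-f, -f', η₂, t, hf.neg, hη₂, by linarith, h⟩
end

section
/- Let D be a causal differentiator, let L, N, R, τ ≥ 0, and suppose D is exact in finite time over F_L, i.e., for every R' ≥ 0 there exists a time t_{R'} ≥ 0 such that [D f](t) = ḟ(t) for every f ∈ F_L^{R'} and every t ≥ t_{R'}. Then there exist f ∈ F_L^R, a noise η ∈ E_N, and a time t ≥ τ such that |ḟ(t) − [D(f + η)](t)| ≥ 2·√(2·N·L). In particular, the worst-case differentiation error of D from time τ over F_L^R with noise bound N is at least 2·√(2·N·L). -/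
open Set Filter Topology

/-!
Take `h = spike a` with `a = √(2N/L)`: a `C¹` function with `|h''| ≤ 2` that vanishes on
`(-∞, 0]`, stays within `a²/2` of zero on `(-∞, 2a]`, and has slope `2a` at `2a`. After a delay
`s₀ ≥ max τ t_R`, the signals `f = -(L/2) h(· - s₀)` and `g = (L/2) h(· - s₀)` both lie in
`F_L^R`, and `g - f = L h(· - s₀)` is bounded by `L a²/2 = N` up to `T = s₀ + 2a`. With the
noise `η = g - f` on `[0, T]`, the input `f + η` equals `g` there, so causality and exactness
force `D (f + η) T = g'(T) = L a`, while `f'(T) = -L a`: an error of `2 L a = 2√(2NL)`.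
-/

lemma hasDerivAt_sq_max_zero (x : ℝ) :
    HasDerivAt (fun s : ℝ => max s 0 ^ 2) (2 * max x 0) x := by
  refine hasDerivAt_of_hasDerivAt_of_ne' (g := fun y => 2 * max y 0) (x := 0) (fun y hy => ?_)
    (by fun_prop) (by fun_prop) x
  rcases hy.lt_or_gt with hy | hy
  · have hzero : (fun s : ℝ => max s 0 ^ 2) =ᶠ[𝓝 y] fun _ => 0 := by
      filter_upwards [Iio_mem_nhds hy] with s (hs : s < 0)
      simp [hs.le]
    simpa [hy.le] using (hasDerivAt_const y (0 : ℝ)).congr_of_eventuallyEq hzero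
  · have hsq : (fun s : ℝ => max s 0 ^ 2) =ᶠ[𝓝 y] fun s => s ^ 2 := by
      filter_upwards [Ioi_mem_nhds hy] with s (hs : 0 < s)
      simp [hs.le]
    simpa [hy.le] using (hasDerivAt_pow 2 y).congr_of_eventuallyEq hsq

/-- `spike a` has second derivative `-2` on `(0, a/2)`, `2` on `(a/2, 2a)` and `0` elsewhere. -/
noncomputable def spike (a s : ℝ) : ℝ :=
  -max s 0 ^ 2 + 2 * max (s - a / 2) 0 ^ 2 - max (s - 2 * a) 0 ^ 2

noncomputable def spikeSlope (a s : ℝ) : ℝ :=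
  -max s 0 + 2 * max (s - a / 2) 0 - max (s - 2 * a) 0

lemma hasDerivAt_spike (a x : ℝ) : HasDerivAt (spike a) (2 * spikeSlope a x) x := by
  have h₁ := hasDerivAt_sq_max_zero x
  have h₂ := (hasDerivAt_sq_max_zero (x - a / 2)).comp_sub_const x (a / 2)
  have h₃ := (hasDerivAt_sq_max_zero (x - 2 * a)).comp_sub_const x (2 * a)
  exact ((h₁.neg.add (h₂.const_mul 2)).sub h₃).congr_deriv (by rw [spikeSlope]; ring)

@[fun_prop]
lemma continuous_spike (a : ℝ) : Continuous (spike a) := by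
  unfold spike; fun_prop

lemma spikeSlope_eq_clamp {a : ℝ} (ha : 0 ≤ a) :
    spikeSlope a = fun s => min a (max (s - a) (-min (max s 0) (a / 2))) := by
  funext s
  simp only [spikeSlope, max_def, min_def]
  split_ifs <;> linarith

lemma lipschitzWith_spikeSlope {a : ℝ} (ha : 0 ≤ a) : LipschitzWith 1 (spikeSlope a) := by
  rw [spikeSlope_eq_clamp ha]
  have hsub : LipschitzWith 1 fun s : ℝ => s - a := by
    simpa using LipschitzWith.id.sub (LipschitzWith.const a)
  simpa using (hsub.max ((LipschitzWith.id.max_const 0).min_const (a / 2)).neg).const_min a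

lemma spike_of_nonpos {a s : ℝ} (ha : 0 ≤ a) (hs : s ≤ 0) : spike a s = 0 := by
  simp [spike, hs, show s - a / 2 ≤ 0 by linarith, show s - 2 * a ≤ 0 by linarith]

lemma spikeSlope_of_nonpos {a s : ℝ} (ha : 0 ≤ a) (hs : s ≤ 0) : spikeSlope a s = 0 := by
  simp [spikeSlope, hs, show s - a / 2 ≤ 0 by linarith, show s - 2 * a ≤ 0 by linarith]

lemma spikeSlope_two_mul {a : ℝ} (ha : 0 ≤ a) : spikeSlope a (2 * a) = a := by
  simp only [spikeSlope, sub_self, max_self, max_eq_left (by linarith : 0 ≤ 2 * a),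
    max_eq_left (by linarith : 0 ≤ 2 * a - a / 2)]
  ring

lemma abs_spike_le {a s : ℝ} (ha : 0 ≤ a) (hs : s ≤ 2 * a) : |spike a s| ≤ a ^ 2 / 2 := by
  rw [spike, max_eq_right (by linarith : s - 2 * a ≤ 0), abs_le]
  simp only [max_def]
  split_ifs <;> constructor <;> nlinarith [sq_nonneg (s - a)]

lemma exists_spike_width {L N : ℝ} (hL : 0 ≤ L) (hN : 0 ≤ N) :
    ∃ a, 0 ≤ a ∧ L * a ^ 2 ≤ 2 * N ∧ L * a = √(2 * N * L) := by
  rcases hL.eq_or_lt with rfl | hL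
  · exact ⟨0, le_rfl, by simp [hN], by simp⟩
  refine ⟨√(2 * N / L), Real.sqrt_nonneg _, ?_, ?_⟩
  · rw [Real.sq_sqrt (by positivity), mul_div_cancel₀ _ hL.ne']
  · calc L * √(2 * N / L) = √(L ^ 2) * √(2 * N / L) := by rw [Real.sqrt_sq hL.le]
      _ = √(L ^ 2 * (2 * N / L)) := (Real.sqrt_mul (sq_nonneg L) _).symm
      _ = √(2 * N * L) := by congr 1; field_simp

lemma isFLR_spike {L R a c s₀ : ℝ} (hR : 0 ≤ R) (ha : 0 ≤ a) (hs₀ : 0 ≤ s₀) (hc : |c| ≤ L) :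
    IsFLR L R (fun t => c / 2 * spike a (t - s₀)) (fun t => c * spikeSlope a (t - s₀)) := by
  refine ⟨⟨fun t _ => ?_, fun s _ t _ => ?_⟩, ?_, ?_⟩
  · have h := ((hasDerivAt_spike a (t - s₀)).comp_sub_const t s₀).const_mul (c / 2)
    exact (h.congr_deriv (by ring)).hasDerivWithinAt
  · have hslope := (lipschitzWith_spikeSlope ha).dist_le_mul (s - s₀) (t - s₀)
    simp only [Real.dist_eq, NNReal.coe_one, one_mul, sub_sub_sub_cancel_right] at hslope
    rw [← mul_sub, abs_mul]
    exact mul_le_mul hc hslope (abs_nonneg _) ((abs_nonneg c).trans hc)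
  · simp [spike_of_nonpos ha (neg_nonpos.2 hs₀), hR]
  · simp [spikeSlope_of_nonpos ha (neg_nonpos.2 hs₀), hR]

lemma isEN_indicator_spike {L N a s₀ : ℝ} (hL : 0 ≤ L) (ha : 0 ≤ a) (hLa : L * a ^ 2 ≤ 2 * N) :
    IsEN N ((Iic (s₀ + 2 * a)).indicator fun t => L * spike a (t - s₀)) := by
  refine ⟨(by fun_prop : Continuous fun t => L * spike a (t - s₀)).measurable.indicator
    measurableSet_Iic, fun t _ => ?_⟩
  by_cases ht : t ∈ Iic (s₀ + 2 * a)
  · rw [Set.indicator_of_mem ht, abs_mul, abs_of_nonneg hL]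
    calc L * |spike a (t - s₀)| ≤ L * (a ^ 2 / 2) :=
          mul_le_mul_of_nonneg_left (abs_spike_le ha (sub_le_iff_le_add'.2 ht)) hL
      _ ≤ N := by linarith
  · rw [Set.indicator_of_notMem ht, abs_zero]
    nlinarith [mul_nonneg hL (sq_nonneg a)]

theorem stmt4_general (D : (ℝ → ℝ) → ℝ → ℝ) (hD : Causal D)
    (L N R τ : ℝ) (hL : 0 ≤ L) (hN : 0 ≤ N) (hR : 0 ≤ R)
    (hexact : ∀ R' : ℝ, 0 ≤ R' → ∃ tR : ℝ, 0 ≤ tR ∧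
      ∀ f f' : ℝ → ℝ, IsFLR L R' f f' → ∀ t, tR ≤ t → D f t = f' t) :
    ∃ (f f' η : ℝ → ℝ) (t : ℝ), IsFLR L R f f' ∧ IsEN N η ∧ τ ≤ t ∧
      2 * Real.sqrt (2 * N * L) ≤ |f' t - D (f + η) t| := by
  obtain ⟨a, ha, hLa, hLa_eq⟩ := exists_spike_width hL hN
  obtain ⟨tR, htR, hexactR⟩ := hexact R hR
  set s₀ := max τ tR
  have hs₀ : 0 ≤ s₀ := htR.trans (le_max_right _ _)
  set T := s₀ + 2 * a
  have hslope : spikeSlope a (T - s₀) = a := by rw [add_sub_cancel_left, spikeSlope_two_mul ha]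
  refine ⟨fun t => -L / 2 * spike a (t - s₀), fun t => -L * spikeSlope a (t - s₀),
    (Iic T).indicator fun t => L * spike a (t - s₀), T,
    isFLR_spike hR ha hs₀ (by rw [abs_neg, abs_of_nonneg hL]), isEN_indicator_spike hL ha hLa,
    (le_max_left _ _).trans (by linarith), ?_⟩
  have hDT : D ((fun t => -L / 2 * spike a (t - s₀)) +
      (Iic T).indicator fun t => L * spike a (t - s₀)) T = L * spikeSlope a (T - s₀) := by
    rw [hD _ (fun t => L / 2 * spike a (t - s₀)) T fun t ht => ?_]
    · exact hexactR _ _ (isFLR_spike hR ha hs₀ (abs_of_nonneg hL).le) T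
        ((le_max_right _ _).trans (by linarith))
    · simp only [Pi.add_apply, Set.indicator_of_mem (show t ∈ Iic T from ht.2)]
      ring
  dsimp only
  rw [hDT, hslope, ← hLa_eq, show -L * a - L * a = -(2 * (L * a)) by ring, abs_neg,
    abs_of_nonneg (by positivity)]

theorem stmt4 (D : (ℝ → ℝ) → ℝ → ℝ) (hD : Causal D)
    (L N R τ : ℝ) (hL : 0 ≤ L) (hN : 0 ≤ N) (hR : 0 ≤ R) (hτ : 0 ≤ τ)
    (hexact : ∀ R' : ℝ, 0 ≤ R' → ∃ tR : ℝ, 0 ≤ tR ∧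
      ∀ f f' : ℝ → ℝ, IsFLR L R' f f' → ∀ t, tR ≤ t → D f t = f' t) :
    ∃ (f f' η : ℝ → ℝ) (t : ℝ), IsFLR L R f f' ∧ IsEN N η ∧ τ ≤ t ∧
      2 * Real.sqrt (2 * N * L) ≤ |f' t - D (f + η) t| :=
  stmt4_general D hD L N R τ hL hN hR hexact
end

section
/- Let L ≥ 0 and let D be a causal differentiator that is exact from the beginning over F_L, i.e., for every R ≥ 0, every f ∈ F_L^R, and every t > 0 one has [D f](t) = ḟ(t). Then D is not robust from the beginning: there exists f ∈ F_L^0 (namely f = 0) such that for every N > 0 there exist η ∈ E_N and a time t ≥ 0 with |[D f](t) − [D(f + η)](t)| ≥ 1; consequently the quantity limsup over N → 0⁺ of sup over f ∈ F_L^0, η ∈ E_N, t ≥ 0 of |[D f](t) − [D(f + η)](t)| is at least 1, hence nonzero. -/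
open Set Filter Topology

theorem stmt5 (L : ℝ) (hL : 0 ≤ L) (D : (ℝ → ℝ) → ℝ → ℝ) (hD : Causal D)
    (hexact : ∀ R : ℝ, 0 ≤ R → ∀ f f' : ℝ → ℝ, IsFLR L R f f' →
      ∀ t : ℝ, 0 < t → D f t = f' t) :
    ∀ N : ℝ, 0 < N → ∃ (η : ℝ → ℝ) (t : ℝ), IsEN N η ∧ 0 ≤ t ∧
      1 ≤ |D (fun _ => (0:ℝ)) t - D ((fun _ => (0:ℝ)) + η) t| := by
  intro N hN
  refine ⟨fun t => min t N, N, ⟨?_, ?_⟩, le_of_lt hN, ?_⟩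
  · exact (measurable_id.min measurable_const)
  · intro t ht
    rw [abs_of_nonneg (le_min ht hN.le)]
    exact min_le_right _ _
  · have h0 : D (fun _ => (0:ℝ)) N = 0 := by
      have : IsFLR L 0 (fun _ => (0:ℝ)) (fun _ => (0:ℝ)) := by
        refine ⟨⟨fun t _ => hasDerivWithinAt_const _ _ _, fun s _ t _ => ?_⟩, by simp, by simp⟩
        simp [mul_nonneg hL (abs_nonneg _)]
      simpa using hexact 0 le_rfl _ _ this N hN
    have hcaus : D ((fun _ => (0:ℝ)) + fun t => min t N) N = D id N := by
      apply hD
      intro t ht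
      simp [min_eq_left ht.2]
    have hid : D id N = 1 := by
      have : IsFLR L 1 id (fun _ => (1:ℝ)) := by
        refine ⟨⟨fun t _ => (hasDerivAt_id t).hasDerivWithinAt, fun s _ t _ => ?_⟩, by simp, by simp⟩
        simp [mul_nonneg hL (abs_nonneg _)]
      exact hexact 1 zero_le_one _ _ this N hN
    rw [h0, hcaus, hid]
    norm_num
end

section
/- Let L > 0 and let D be a linear differentiator, i.e., D(α₁u₁ + α₂u₂) = α₁·Du₁ + α₂·Du₂ for all admissible inputs u₁, u₂ and reals α₁, α₂. Then D cannot be both exact in finite time over F_L and robust in finite time over F_L. That is, it is impossible that simultaneously: (exactness) for every R ≥ 0 there exists t_R such that [D f](t) = ḟ(t) for all f ∈ F_L^R and all t ≥ t_R; and (robustness) for every R ≥ 0 there exists t'_R such that for every δ > 0 there exists N₀ > 0 with |[D f](t) − [D(f + η)](t)| ≤ δ for all N ∈ (0, N₀], f ∈ F_L^R, η ∈ E_N, and t ≥ t'_R. -/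
open Set Filter Topology

/-- The class `𝒰` of admissible inputs: sums `f + η` with `f ∈ F_L`, `η ∈ E_N`
for some `L, N ≥ 0`. -/
def InU (u : ℝ → ℝ) : Prop :=
  ∃ (L N : ℝ) (f f' η : ℝ → ℝ), 0 ≤ L ∧ 0 ≤ N ∧ IsFL L f f' ∧ IsEN N η ∧ u = f + η

/-!
Take zero as the clean signal and, as noise, the oscillation `η(t) = a (1 - cos ω t)` with
amplitude `2a = N₀` and frequency `ω = 4 / N₀`. Its second derivative is far too large for `F_L`,
but `η` is a scalar multiple of the slow oscillation `(L / ω²) (1 - cos ω t) ∈ F_L^0`, so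
linearity and exactness force `Dη(t) = a ω sin ω t`. At the times where `sin ω t = 1` this is `2`,
while robustness (with `δ = 1`) demands `|D 0 - D η| ≤ 1` with `D 0 = 0`.
-/

open Real

lemma hasDerivAt_mul_one_sub_cos (a ω t : ℝ) :
    HasDerivAt (fun s => a * (1 - cos (ω * s))) (a * ω * sin (ω * t)) t :=
  ((((hasDerivAt_id' t).const_mul ω).cos).const_sub 1).const_mul a |>.congr_deriv (by ring)

lemma isFLR_mul_one_sub_cos {L a ω : ℝ} (h : |a| * ω ^ 2 ≤ L) :
    IsFLR L 0 (fun t => a * (1 - cos (ω * t))) (fun t => a * ω * sin (ω * t)) := by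
  refine ⟨⟨fun t _ => (hasDerivAt_mul_one_sub_cos a ω t).hasDerivWithinAt, fun s _ t _ => ?_⟩,
    by simp, by simp⟩
  calc |a * ω * sin (ω * s) - a * ω * sin (ω * t)|
      = |a| * |ω| * |sin (ω * s) - sin (ω * t)| := by rw [← mul_sub, abs_mul, abs_mul]
    _ ≤ |a| * |ω| * |ω * s - ω * t| := by gcongr ?_ * ?_; exact abs_sin_sub_sin_le _ _
    _ = |a| * ω ^ 2 * |s - t| := by rw [← mul_sub, abs_mul, ← sq_abs ω]; ring
    _ ≤ L * |s - t| := by gcongr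

lemma isEN_mul_one_sub_cos {N a : ℝ} (ω : ℝ) (h : 2 * |a| ≤ N) :
    IsEN N (fun t => a * (1 - cos (ω * t))) := by
  refine ⟨by fun_prop, fun t _ => ?_⟩
  have h1 : |1 - cos (ω * t)| ≤ 2 := by
    rw [abs_le]; constructor <;> linarith [neg_one_le_cos (ω * t), cos_le_one (ω * t)]
  calc |a * (1 - cos (ω * t))| = |a| * |1 - cos (ω * t)| := abs_mul _ _
    _ ≤ |a| * 2 := by gcongr
    _ ≤ N := by linarith

lemma isFLR_zero {L : ℝ} (hL : 0 ≤ L) : IsFLR L 0 0 0 :=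
  ⟨⟨fun t _ => hasDerivWithinAt_const t _ 0,
    fun s _ t _ => by simpa using mul_nonneg hL (abs_nonneg (s - t))⟩, by simp, by simp⟩

lemma IsFL.inU {L : ℝ} {f f' : ℝ → ℝ} (hL : 0 ≤ L) (hf : IsFL L f f') : InU f :=
  ⟨L, 0, f, f', 0, hL, le_rfl, hf, ⟨measurable_zero, by simp⟩, by simp⟩

lemma exists_ge_sin_mul_eq_one {ω : ℝ} (hω : 0 < ω) (T : ℝ) :
    ∃ t, T ≤ t ∧ sin (ω * t) = 1 := by
  obtain ⟨k, hk⟩ := exists_nat_ge (ω * T / (2 * π))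
  refine ⟨(π / 2 + k * (2 * π)) / ω, ?_, ?_⟩
  · rw [le_div_iff₀ hω, mul_comm]
    rw [div_le_iff₀ (by positivity)] at hk
    linarith [pi_pos]
  · rw [mul_div_cancel₀ _ hω.ne', sin_add_nat_mul_two_pi, sin_pi_div_two]

def IsLinearOnU (D : (ℝ → ℝ) → ℝ → ℝ) : Prop :=
  ∀ u₁ u₂ : ℝ → ℝ, InU u₁ → InU u₂ → ∀ α₁ α₂ : ℝ,
    D (fun t => α₁ * u₁ t + α₂ * u₂ t) = fun t => α₁ * D u₁ t + α₂ * D u₂ t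

lemma IsLinearOnU.apply_const_mul {D : (ℝ → ℝ) → ℝ → ℝ}
    (hlin : IsLinearOnU D) {u : ℝ → ℝ} (hu : InU u) (c t : ℝ) :
    D (fun s => c * u s) t = c * D u t := by
  simpa using congrFun (hlin u u hu hu c 0) t

lemma IsLinearOnU.apply_mul_one_sub_cos {L tR : ℝ} (hL : 0 < L)
    {D : (ℝ → ℝ) → ℝ → ℝ} (hlin : IsLinearOnU D)
    (hexact : ∀ f f' : ℝ → ℝ, IsFLR L 0 f f' → ∀ t, tR ≤ t → D f t = f' t)
    (a : ℝ) {ω : ℝ} (hω : ω ≠ 0) {t : ℝ} (ht : tR ≤ t) :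
    D (fun s => a * (1 - cos (ω * s))) t = a * ω * sin (ω * t) := by
  set A := L / ω ^ 2
  have hA : A ≠ 0 := by positivity
  have hg : IsFLR L 0 (fun s => A * (1 - cos (ω * s))) (fun s => A * ω * sin (ω * s)) :=
    isFLR_mul_one_sub_cos <| by
      rw [abs_of_pos (by positivity)]; exact (div_mul_cancel₀ _ (pow_ne_zero 2 hω)).le
  have hscale : (fun s => a * (1 - cos (ω * s))) = fun s => a / A * (A * (1 - cos (ω * s))) := by
    ext s; field_simp
  rw [hscale, hlin.apply_const_mul (hg.1.inU hL.le), hexact _ _ hg t ht]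
  field_simp

theorem stmt6 (L : ℝ) (hL : 0 < L) (D : (ℝ → ℝ) → ℝ → ℝ)
    (hlin : ∀ u₁ u₂ : ℝ → ℝ, InU u₁ → InU u₂ → ∀ α₁ α₂ : ℝ,
      D (fun t => α₁ * u₁ t + α₂ * u₂ t) = fun t => α₁ * D u₁ t + α₂ * D u₂ t) :
    ¬ ((∀ R : ℝ, 0 ≤ R → ∃ tR : ℝ, ∀ f f' : ℝ → ℝ, IsFLR L R f f' →
          ∀ t, tR ≤ t → D f t = f' t) ∧
       (∀ R : ℝ, 0 ≤ R → ∃ tR' : ℝ, ∀ δ : ℝ, 0 < δ → ∃ N₀ : ℝ, 0 < N₀ ∧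
          ∀ N : ℝ, 0 < N → N ≤ N₀ → ∀ f f' η : ℝ → ℝ, IsFLR L R f f' → IsEN N η →
            ∀ t, tR' ≤ t → |D f t - D (f + η) t| ≤ δ)) := by
  rintro ⟨hexact, hrobust⟩
  obtain ⟨t₀, ht₀⟩ := hexact 0 le_rfl
  obtain ⟨t₁, ht₁⟩ := hrobust 0 le_rfl
  obtain ⟨N₀, hN₀, hrob⟩ := ht₁ 1 one_pos
  set ω := 4 / N₀
  set η : ℝ → ℝ := fun s => N₀ / 2 * (1 - cos (ω * s))
  have hη : IsEN N₀ η := isEN_mul_one_sub_cos ω (by rw [abs_of_pos (by positivity)]; linarith)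
  obtain ⟨t, ht, hsin⟩ := exists_ge_sin_mul_eq_one (by positivity : 0 < ω) (max t₀ t₁)
  have hD0 : D 0 t = 0 := ht₀ 0 0 (isFLR_zero hL.le) t (le_of_max_le_left ht)
  have hDη : D η t = 2 := by
    rw [IsLinearOnU.apply_mul_one_sub_cos hL hlin ht₀ _ (by positivity) (le_of_max_le_left ht),
      hsin]
    simp only [ω]; field_simp; norm_num
  have hclose := hrob N₀ hN₀ le_rfl 0 0 η (isFLR_zero hL.le) hη t (le_of_max_le_right ht)
  rw [zero_add, hD0, hDη] at hclose
  norm_num at hclose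
end

section
/- Let L ≥ 0 and let D be a differentiator with finite asymptotic accuracy over F_L: suppose there exist a constant C ≥ 0, an ε > 0, and a function 𝒯 : [0,∞) × [0,ε] → [0,∞) continuous in its second argument such that |ḟ(t) − [D(f + η)](t)| ≤ C·√(N·L) for all N ∈ [0, ε], all R ≥ 0, all f ∈ F_L^R, all η ∈ E_N, and all t ≥ 𝒯(R, N). Then D is exact in finite time over F_L (for every R there exists t_R with [D f](t) = ḟ(t) for all f ∈ F_L^R and t ≥ t_R) and robust in finite time over F_L (for every R there exists t_R such that for every δ > 0 there exists N₀ > 0 with |[D f](t) − [D(f + η)](t)| ≤ δ for all N ∈ (0, N₀], f ∈ F_L^R, η ∈ E_N, t ≥ t_R). -/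
open Set Filter Topology

theorem stmt7 (L : ℝ) (hL : 0 ≤ L) (D : (ℝ → ℝ) → ℝ → ℝ)
    (C ε : ℝ) (hC : 0 ≤ C) (hε : 0 < ε)
    (𝒯 : ℝ → ℝ → ℝ) (h𝒯nonneg : ∀ R N, 0 ≤ 𝒯 R N)
    (h𝒯cont : ∀ R : ℝ, ContinuousOn (𝒯 R) (Set.Icc 0 ε))
    (hacc : ∀ N : ℝ, 0 ≤ N → N ≤ ε → ∀ R : ℝ, 0 ≤ R →
      ∀ f f' η : ℝ → ℝ, IsFLR L R f f' → IsEN N η →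
        ∀ t, 𝒯 R N ≤ t → |f' t - D (f + η) t| ≤ C * Real.sqrt (N * L)) :
    (∀ R : ℝ, 0 ≤ R → ∃ tR : ℝ, ∀ f f' : ℝ → ℝ, IsFLR L R f f' →
        ∀ t, tR ≤ t → D f t = f' t) ∧
    (∀ R : ℝ, 0 ≤ R → ∃ tR : ℝ, ∀ δ : ℝ, 0 < δ → ∃ N₀ : ℝ, 0 < N₀ ∧
        ∀ N : ℝ, 0 < N → N ≤ N₀ → ∀ f f' η : ℝ → ℝ, IsFLR L R f f' → IsEN N η →
          ∀ t, tR ≤ t → |D f t - D (f + η) t| ≤ δ) := by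
  have hzero : IsEN 0 (fun _ => 0) := ⟨measurable_const, fun t _ => by simp⟩
  have hexact : ∀ R : ℝ, 0 ≤ R → ∀ f f' : ℝ → ℝ, IsFLR L R f f' →
      ∀ t, 𝒯 R 0 ≤ t → D f t = f' t := by
    intro R hR f f' hf t ht
    have h := hacc 0 le_rfl hε.le R hR f f' (fun _ => 0) hf hzero t ht
    have hfe : f + (fun _ => 0) = f := by funext x; simp
    rw [hfe] at h
    simp at h
    linarith
  constructor
  · intro R hR
    exact ⟨𝒯 R 0, fun f f' hf t ht => hexact R hR f f' hf t ht⟩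
  · intro R hR
    -- uniform time bound
    have hcpt : IsCompact (𝒯 R '' Set.Icc 0 ε) :=
      (isCompact_Icc).image_of_continuousOn (h𝒯cont R)
    obtain ⟨tR, htR⟩ := hcpt.bddAbove
    refine ⟨tR, fun δ hδ => ?_⟩
    refine ⟨min ε (δ^2 / ((C+1)^2 * (L+1))), lt_min hε (by positivity), ?_⟩
    intro N hN hNle f f' η hf hη t ht
    have hNε : N ≤ ε := hNle.trans (min_le_left _ _)
    have htT : 𝒯 R N ≤ t := le_trans (htR ⟨N, ⟨hN.le, hNε⟩, rfl⟩) ht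
    have h0T : 𝒯 R 0 ≤ t := le_trans (htR ⟨0, ⟨le_rfl, hε.le⟩, rfl⟩) ht
    have h1 := hacc N hN.le hNε R hR f f' η hf hη t htT
    have h2 := hexact R hR f f' hf t h0T
    have hsq : Real.sqrt (N * L) ≤ δ / (C + 1) := by
      have hNb : N ≤ δ^2 / ((C+1)^2 * (L+1)) := hNle.trans (min_le_right _ _)
      have hNL : N * L ≤ (δ / (C+1))^2 := by
        have h3 : N * L ≤ δ^2 / ((C+1)^2 * (L+1)) * L := by
          exact mul_le_mul_of_nonneg_right hNb hL
        have h4 : δ^2 / ((C+1)^2 * (L+1)) * L ≤ (δ / (C+1))^2 := by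
          rw [div_pow]
          rw [div_mul_eq_mul_div, div_le_div_iff₀ (by positivity) (by positivity)]
          nlinarith [sq_nonneg δ, sq_nonneg (C+1)]
        linarith
      calc Real.sqrt (N * L) ≤ Real.sqrt ((δ / (C+1))^2) := Real.sqrt_le_sqrt hNL
        _ = δ / (C+1) := Real.sqrt_sq (by positivity)
    have hCd : C * (δ / (C+1)) ≤ δ := by
      rw [mul_div_assoc']
      rw [div_le_iff₀ (by positivity)]
      nlinarith
    have := abs_sub_abs_le_abs_sub (f' t - D (f + η) t) (f' t - D f t)
    have key : |D f t - D (f + η) t| ≤ C * Real.sqrt (N * L) := by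
      have : D f t - D (f + η) t = (f' t - D (f + η) t) - (f' t - D f t) := by ring
      rw [this, h2]
      simpa using h1
    calc |D f t - D (f + η) t| ≤ C * Real.sqrt (N * L) := key
      _ ≤ C * (δ / (C+1)) := mul_le_mul_of_nonneg_left hsq hC
      _ ≤ δ := hCd
end

section
/- Let L > 0 and let D be a causal differentiator. Then there do NOT exist a constant C < 2·√2, an ε > 0, and a function 𝒯 : [0,∞) × [0,ε] → [0,∞) continuous in its second argument such that |ḟ(t) − [D(f + η)](t)| ≤ C·√(N·L) holds for all N ∈ [0, ε], all R ≥ 0, all f ∈ F_L^R, all η ∈ E_N, and all t ≥ 𝒯(R, N). In other words, the asymptotic accuracy of any causal differentiator is at least 2·√2. -/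
open Set Filter Topology

theorem stmt8 (L : ℝ) (hL : 0 < L) (D : (ℝ → ℝ) → ℝ → ℝ) (hD : Causal D) :
    ¬ ∃ (C ε : ℝ) (𝒯 : ℝ → ℝ → ℝ), C < 2 * Real.sqrt 2 ∧ 0 < ε ∧
        (∀ R N, 0 ≤ 𝒯 R N) ∧
        (∀ R : ℝ, ContinuousOn (𝒯 R) (Set.Icc 0 ε)) ∧
        (∀ N : ℝ, 0 ≤ N → N ≤ ε → ∀ R : ℝ, 0 ≤ R →
          ∀ f f' η : ℝ → ℝ, IsFLR L R f f' → IsEN N η →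
            ∀ t, 𝒯 R N ≤ t → |f' t - D (f + η) t| ≤ C * Real.sqrt (N * L)) := by
  rintro ⟨C, ε, 𝒯, hC, hε, -, -, hbound⟩
  set τ : ℝ := Real.sqrt (2 * ε / L) with hτdef
  have hτpos : 0 < τ := Real.sqrt_pos.mpr (by positivity)
  have hτsq : τ ^ 2 = 2 * ε / L := Real.sq_sqrt (by positivity)
  set s : ℝ := max 0 (max (𝒯 (ε/2) ε) (𝒯 (ε/2) 0)) with hsdef
  have hs0 : (0:ℝ) ≤ s := le_max_left _ _
  set T : ℝ := s + τ with hTdef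
  have hT0 : (0:ℝ) ≤ T := by positivity
  -- the derivative: clamped ramp
  set g : ℝ → ℝ := fun x => L * min (max (x - s) 0) τ with hgdef
  have hgcont : Continuous g := by
    apply continuous_const.mul
    exact ((continuous_id.sub continuous_const).max continuous_const).min continuous_const
  have hgnonneg : ∀ x, 0 ≤ g x := fun x =>
    mul_nonneg hL.le (le_min (le_max_right _ _) hτpos.le)
  have hglip : ∀ a b : ℝ, |g a - g b| ≤ L * |a - b| := by
    intro a b
    have h1 : |min (max (a - s) 0) τ - min (max (b - s) 0) τ| ≤ |a - b| := by
      refine le_trans (abs_min_sub_min_le_max _ _ _ _) ?_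
      simp only [sub_self, abs_zero]
      refine max_le (le_trans (abs_max_sub_max_le_abs _ _ _) ?_) (abs_nonneg _)
      simp [sub_sub_sub_cancel_right]
    calc |g a - g b| = L * |min (max (a - s) 0) τ - min (max (b - s) 0) τ| := by
          rw [hgdef]; rw [← mul_sub, abs_mul, abs_of_pos hL]
      _ ≤ L * |a - b| := by nlinarith [abs_nonneg (a - b)]
  -- the function h
  set h : ℝ → ℝ := fun t => -(ε/2) + ∫ x in (0:ℝ)..t, g x with hhdef
  have hderiv : ∀ t, HasDerivAt h (g t) t := fun t =>
    (hgcont.integral_hasStrictDerivAt 0 t).hasDerivAt.const_add _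
  have hmono : ∀ a b : ℝ, a ≤ b → h a ≤ h b := by
    intro a b hab
    have : h b - h a = ∫ x in a..b, g x := by
      rw [hhdef]; simp only [add_sub_add_left_eq_sub]
      rw [← intervalIntegral.integral_interval_sub_left
        (hgcont.intervalIntegrable 0 b) (hgcont.intervalIntegrable 0 a)]
    have h2 : (0:ℝ) ≤ ∫ x in a..b, g x :=
      intervalIntegral.integral_nonneg hab fun x _ => hgnonneg x
    linarith
  have hh0 : h 0 = -(ε/2) := by simp [hhdef]
  have hg0 : g 0 = 0 := by
    rw [hgdef]; simp only
    rw [max_eq_right (by linarith : 0 - s ≤ 0), min_eq_left hτpos.le, mul_zero]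
  have hgT : g T = L * τ := by
    rw [hgdef]; simp only [hTdef]
    rw [show s + τ - s = τ by ring, max_eq_left hτpos.le, min_self]
  -- value at T
  have hhT : h T = ε/2 := by
    have hsplit : ∫ x in (0:ℝ)..T, g x = (∫ x in (0:ℝ)..s, g x) + ∫ x in s..T, g x :=
      (intervalIntegral.integral_add_adjacent_intervals (hgcont.intervalIntegrable 0 s)
        (hgcont.intervalIntegrable s T)).symm
    have h1 : (∫ x in (0:ℝ)..s, g x) = 0 := by
      rw [intervalIntegral.integral_congr (g := fun _ => (0:ℝ)) ?_,
        intervalIntegral.integral_const, smul_zero]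
      intro x hx
      rw [Set.uIcc_of_le hs0] at hx
      rw [hgdef]; simp only
      rw [max_eq_right (by linarith [hx.2] : x - s ≤ 0), min_eq_left hτpos.le, mul_zero]
    have h2 : (∫ x in s..T, g x) = ε := by
      have : (∫ x in s..T, g x) = ∫ x in s..T, L * (x - s) := by
        refine intervalIntegral.integral_congr ?_
        intro x hx
        rw [Set.uIcc_of_le (by linarith : s ≤ T)] at hx
        rw [hgdef]; simp only
        rw [max_eq_left (by linarith [hx.1] : 0 ≤ x - s),
          min_eq_left (by linarith [hx.2, hTdef] : x - s ≤ τ)]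
      rw [this]
      have : ∫ x in s..T, L * (x - s) = L * ∫ x in s..T, (x - s) := by
        exact intervalIntegral.integral_const_mul _ _
      rw [this, intervalIntegral.integral_sub intervalIntegral.intervalIntegrable_id
        intervalIntegrable_const, integral_id, intervalIntegral.integral_const]
      have : L * ((T ^ 2 - s ^ 2) / 2 - (T - s) • s) = L * τ ^ 2 / 2 := by
        simp only [smul_eq_mul, hTdef]; ring
      rw [this, hτsq]; field_simp
    rw [hhdef]; simp only; rw [hsplit, h1, h2]; ring
  have hhbound : ∀ t, 0 ≤ t → t ≤ T → |h t| ≤ ε/2 := by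
    intro t ht1 ht2
    rw [abs_le]
    constructor
    · have := hmono 0 t ht1; rw [hh0] at this; linarith
    · have := hmono t T ht2; rw [hhT] at this; linarith
  -- IsFL for h and -h
  have hFL : IsFL L h g := by
    constructor
    · exact fun t _ => (hderiv t).hasDerivWithinAt
    · exact fun a _ b _ => hglip a b
  have hFLneg : IsFL L (fun t => -(h t)) (fun t => -(g t)) := by
    constructor
    · exact fun t _ => ((hderiv t).neg).hasDerivWithinAt
    · intro a _ b _
      rw [show -(g a) - -(g b) = -(g a - g b) by ring, abs_neg]
      exact hglip a b
  have hg0abs : |g 0| ≤ ε/2 := by rw [hg0]; simp; positivity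
  have hh0abs : |h 0| ≤ ε/2 := by rw [hh0]; rw [abs_neg, abs_of_pos (by positivity)]
  -- the noise
  set η₁ : ℝ → ℝ := fun t => if t ≤ T then -2 * h t else 0 with hη₁def
  have hhcont : Continuous h := continuous_iff_continuousAt.mpr fun t => (hderiv t).continuousAt
  have hη₁meas : Measurable η₁ :=
    Measurable.ite (measurableSet_le measurable_id measurable_const)
      (hhcont.measurable.const_mul (-2)) measurable_const
  have hη₁bd : ∀ t ∈ Set.Ici (0:ℝ), |η₁ t| ≤ ε := by
    intro t ht
    rw [hη₁def]; simp only
    split_ifs with hle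
    · rw [abs_mul]
      have hb := hhbound t ht hle
      have : |(-2:ℝ)| = 2 := by norm_num
      rw [this]; linarith
    · simpa using hε.le
  have hT1 : 𝒯 (ε/2) ε ≤ T := by
    have : 𝒯 (ε/2) ε ≤ s := le_trans (le_max_left _ _) (le_max_right 0 _)
    linarith
  have hT2 : 𝒯 (ε/2) 0 ≤ T := by
    have : 𝒯 (ε/2) 0 ≤ s := le_trans (le_max_right _ _) (le_max_right 0 _)
    linarith
  have hR : (0:ℝ) ≤ ε/2 := by positivity
  have b1 := hbound ε hε.le le_rfl (ε/2) hR h g η₁ ⟨hFL, hh0abs, hg0abs⟩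
    ⟨hη₁meas, hη₁bd⟩ T hT1
  have b2 := hbound 0 le_rfl hε.le (ε/2) hR (fun t => -(h t)) (fun t => -(g t)) (fun _ => 0)
    ⟨hFLneg, by simpa using hh0abs, by simpa using hg0abs⟩
    ⟨measurable_const, fun t _ => by simp⟩ T hT2
  have hcaus : D (h + η₁) T = D ((fun t => -(h t)) + fun _ => 0) T := by
    refine hD _ _ T ?_
    intro t ht
    simp only [Pi.add_apply, hη₁def, if_pos ht.2]
    ring
  have hb2' : D ((fun t => -(h t)) + fun _ => 0) T = -(g T) := by
    have hz : C * Real.sqrt (0 * L) = 0 := by simp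
    rw [hz] at b2
    have h0 : -(g T) - D ((fun t => -(h t)) + fun _ => 0) T = 0 :=
      abs_eq_zero.mp (le_antisymm b2 (abs_nonneg _))
    linarith
  rw [hcaus, hb2'] at b1
  have hLτ : L * τ = Real.sqrt 2 * Real.sqrt (ε * L) := by
    rw [← Real.sqrt_mul (by norm_num : (0:ℝ) ≤ 2) (ε * L)]
    have h2 : 2 * (ε * L) = (L * τ) ^ 2 := by
      rw [mul_pow, hτsq]; field_simp
    rw [h2, Real.sqrt_sq (by positivity)]
  have habs : |g T - -(g T)| = 2 * (L * τ) := by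
    have he : g T - -(g T) = 2 * (L * τ) := by rw [hgT]; ring
    rw [he, abs_of_pos (by positivity)]
  rw [habs, hLτ] at b1
  have hs2 : 0 < Real.sqrt (ε * L) := Real.sqrt_pos.mpr (by positivity)
  nlinarith [mul_lt_mul_of_pos_right hC hs2]
end

section
/- Let L, N ≥ 0, let f ∈ F_L, η ∈ E_N, u = f + η, and fix t > 0. For 0 < T ≤ t and σ ∈ [0, T] define Q(t, T, σ) = u(t − σ) − u(t) + ((u(t) − u(t − T))/T)·σ. Then |Q(t, T, σ)| ≤ 2N + L·σ·(T − σ)/2 holds for all T ∈ (0, t] and all σ ∈ [0, T]. -/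
open Set Filter Topology

/-!
With `θ = σ / T`, the point `t - σ` is the convex combination `(1 - θ) t + θ (t - T)`, and
`Q(t, T, σ)` is the error of linear interpolation of `u = f + η` at that point. The noise part
is at most `2N`, a convex combination of values bounded by `N` being bounded by `N`. For the
smooth part, the Lipschitz bound on `f'` makes both `f + L x² / 2` and `-f + L x² / 2` convex;
their convexity inequalities bound the interpolation error of `f` by
`L / 2 · θ (1 - θ) T² = L σ (T - σ) / 2`.
-/

theorem convexOn_add_sq_of_deriv_sub_ge {D : Set ℝ} (hD : Convex ℝ D) {L : ℝ} {f f' : ℝ → ℝ}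
    (hf : ∀ x ∈ D, HasDerivWithinAt f (f' x) D x)
    (hf' : ∀ x ∈ D, ∀ y ∈ D, x ≤ y → -(L * (y - x)) ≤ f' y - f' x) :
    ConvexOn ℝ D (fun x => f x + L / 2 * x ^ 2) := by
  have hderiv : ∀ x ∈ interior D,
      HasDerivAt (fun x => f x + L / 2 * x ^ 2) (f' x + L * x) x := by
    intro x hx
    have hfx := (hf x (interior_subset hx)).hasDerivAt (mem_interior_iff_mem_nhds.mp hx)
    exact (hfx.add ((hasDerivAt_pow 2 x).const_mul (L / 2))).congr_deriv (by norm_num; ring)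
  refine MonotoneOn.convexOn_of_deriv hD ?_ ?_ ?_
  · exact (HasDerivWithinAt.continuousOn hf).add (by fun_prop)
  · exact fun x hx => (hderiv x hx).differentiableAt.differentiableWithinAt
  · intro x hx y hy hxy
    rw [(hderiv x hx).deriv, (hderiv y hy).deriv]
    linarith [hf' x (interior_subset hx) y (interior_subset hy) hxy]

theorem abs_interpolation_error_le_of_lipschitz_deriv {D : Set ℝ} (hD : Convex ℝ D) {L : ℝ}
    {f f' : ℝ → ℝ} (hf : ∀ x ∈ D, HasDerivWithinAt f (f' x) D x)
    (hf' : ∀ x ∈ D, ∀ y ∈ D, |f' x - f' y| ≤ L * |x - y|)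
    {a b : ℝ} (ha : a ∈ D) (hb : b ∈ D) {θ : ℝ} (hθ₀ : 0 ≤ θ) (hθ₁ : θ ≤ 1) :
    |f ((1 - θ) * a + θ * b) - ((1 - θ) * f a + θ * f b)| ≤
      L / 2 * (θ * (1 - θ) * (b - a) ^ 2) := by
  have hdecr : ∀ g g' : ℝ → ℝ, (∀ x ∈ D, ∀ y ∈ D, |g' x - g' y| ≤ L * |x - y|) →
      ∀ x ∈ D, ∀ y ∈ D, x ≤ y → -(L * (y - x)) ≤ g' y - g' x := by
    intro g g' hg' x hx y hy hxy
    have h := hg' y hy x hx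
    rw [abs_of_nonneg (sub_nonneg.mpr hxy)] at h
    linarith [neg_abs_le (g' y - g' x)]
  have hconv := convexOn_add_sq_of_deriv_sub_ge hD hf (hdecr f f' hf')
  have hconv_neg := convexOn_add_sq_of_deriv_sub_ge hD (fun x hx => (hf x hx).neg)
    (hdecr (-f) (-f') fun x hx y hy => by
      rw [Pi.neg_apply, Pi.neg_apply, neg_sub_neg, abs_sub_comm]
      exact hf' x hx y hy)
  -- both convexity inequalities carry the same quadratic defect
  have hsq : (1 - θ) * a ^ 2 + θ * b ^ 2 - ((1 - θ) * a + θ * b) ^ 2 =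
      θ * (1 - θ) * (b - a) ^ 2 := by ring
  have h₁ := hconv.2 ha hb (sub_nonneg.mpr hθ₁) hθ₀ (by ring)
  have h₂ := hconv_neg.2 ha hb (sub_nonneg.mpr hθ₁) hθ₀ (by ring)
  simp only [smul_eq_mul, Pi.neg_apply] at h₁ h₂
  rw [abs_le]
  constructor
  · linear_combination h₂ + L / 2 * hsq
  · linear_combination h₁ + L / 2 * hsq

theorem abs_interpolation_error_le_of_abs_le {N x a b θ : ℝ} (hx : |x| ≤ N) (ha : |a| ≤ N)
    (hb : |b| ≤ N) (hθ₀ : 0 ≤ θ) (hθ₁ : θ ≤ 1) :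
    |x - ((1 - θ) * a + θ * b)| ≤ 2 * N := by
  have hcombo : |(1 - θ) * a + θ * b| ≤ N :=
    calc |(1 - θ) * a + θ * b| ≤ (1 - θ) * |a| + θ * |b| := by
          grw [abs_add_le, abs_mul, abs_mul, abs_of_nonneg (sub_nonneg.mpr hθ₁), abs_of_nonneg hθ₀]
      _ ≤ (1 - θ) * N + θ * N := by gcongr
      _ = N := by ring
  linarith [abs_sub x ((1 - θ) * a + θ * b)]

theorem stmt10_general (L N : ℝ)
    (f f' η u : ℝ → ℝ) (hf : IsFL L f f') (hη : IsEN N η) (hu : u = f + η)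
    (t : ℝ)
    (Q : ℝ → ℝ → ℝ)
    (hQ : ∀ T σ : ℝ, Q T σ = u (t - σ) - u t + ((u t - u (t - T)) / T) * σ) :
    ∀ T : ℝ, 0 < T → T ≤ t → ∀ σ ∈ Set.Icc (0:ℝ) T,
      |Q T σ| ≤ 2 * N + L * σ * (T - σ) / 2 := by
  rintro T hT hTt σ ⟨hσ₀, hσT⟩
  set θ := σ / T with hθ
  have hθ₀ : 0 ≤ θ := div_nonneg hσ₀ hT.le
  have hθ₁ : θ ≤ 1 := (div_le_one hT).mpr hσT
  have hpoint : (1 - θ) * t + θ * (t - T) = t - σ := by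
    rw [hθ]
    field_simp
    ring
  have ht : t ∈ Ici (0 : ℝ) := mem_Ici.mpr (by linarith)
  have htT : t - T ∈ Ici (0 : ℝ) := mem_Ici.mpr (by linarith)
  have htσ : t - σ ∈ Ici (0 : ℝ) := mem_Ici.mpr (by linarith)
  have hsplit : Q T σ = (f (t - σ) - ((1 - θ) * f t + θ * f (t - T))) +
      (η (t - σ) - ((1 - θ) * η t + θ * η (t - T))) := by
    rw [hQ, hu]
    simp only [Pi.add_apply, hθ]
    field_simp
    ring
  have hf_err :=
    abs_interpolation_error_le_of_lipschitz_deriv (convex_Ici 0) hf.1 hf.2 ht htT hθ₀ hθ₁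
  have hη_err :=
    abs_interpolation_error_le_of_abs_le (hη.2 _ htσ) (hη.2 _ ht) (hη.2 _ htT) hθ₀ hθ₁
  rw [hpoint] at hf_err
  calc |Q T σ| ≤ L / 2 * (θ * (1 - θ) * (t - T - t) ^ 2) + 2 * N := by
        rw [hsplit]
        exact (abs_add_le _ _).trans (add_le_add hf_err hη_err)
    _ = 2 * N + L * σ * (T - σ) / 2 := by
        rw [hθ]
        field_simp
        ring

theorem stmt10 (L N : ℝ) (hL : 0 ≤ L) (hN : 0 ≤ N)
    (f f' η u : ℝ → ℝ) (hf : IsFL L f f') (hη : IsEN N η) (hu : u = f + η)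
    (t : ℝ) (ht : 0 < t)
    (Q : ℝ → ℝ → ℝ)
    (hQ : ∀ T σ : ℝ, Q T σ = u (t - σ) - u t + ((u t - u (t - T)) / T) * σ) :
    ∀ T : ℝ, 0 < T → T ≤ t → ∀ σ ∈ Set.Icc (0:ℝ) T,
      |Q T σ| ≤ 2 * N + L * σ * (T - σ) / 2 :=
  stmt10_general L N f f' η u hf hη hu t Q hQ
end

section
/- Let L, N ≥ 0, let T̄ ∈ (0,∞], suppose u = f + η with f ∈ F_L and η ∈ E_N, and fix t > 0. Define Q(t, T, σ) = u(t − σ) − u(t) + ((u(t) − u(t − T))/T)·σ and the noise estimate N̂(t) = (1/2)·sup over T ∈ (0, T̄] with T ≤ t and σ ∈ [0, T] of (|Q(t, T, σ)| − L·σ·(T − σ)/2). For t₀ ∈ [0, t), define the right-sided discontinuity D(t₀) = limsup as τ → t₀⁺ of |η(τ) − η(t₀)|. Then for every t₀ ∈ [0, t) with t₀ ≥ t − T̄, the inequalities D(t₀)/2 ≤ N̂(t) ≤ N hold. -/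
open Set Filter Topology

/-! The secant residual `Q` of `u = f + η` splits into the interpolation error of `f`, at most
`L σ (T - σ) / 2` by Taylor's theorem with Lipschitz derivative, and that of `η`, at most `2N`
since `η(t - σ)` is compared with a convex combination of `η t` and `η (t - T)`; hence `N̂(t) ≤ N`.
Conversely, with `T = t - t₀` and `σ = t - τ` for `τ ↓ t₀`, the jump `η τ - η t₀` equals
`Q T σ` up to terms that vanish as `τ → t₀⁺` (here the continuity of `f` enters), and
`|Q T σ| ≤ 2 N̂(t) + L σ (T - σ) / 2` by definition of `N̂`, with `σ (T - σ) → 0`. -/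

theorem abs_sub_sub_mul_le_of_hasDerivWithinAt_Ici {F F' : ℝ → ℝ} {L p q : ℝ} (hpq : p ≤ q)
    (hF : ContinuousOn F (Icc p q)) (hF' : ∀ y ∈ Ico p q, HasDerivWithinAt F (F' y) (Ici y) y)
    (hlip : ∀ y ∈ Ico p q, |F' y - F' p| ≤ L * (y - p)) :
    |F q - F p - F' p * (q - p)| ≤ L * (q - p) ^ 2 / 2 := by
  have hB (y : ℝ) : HasDerivAt (fun y => L * (y - p) ^ 2 / 2) (L * (y - p)) y :=
    ((((hasDerivAt_id' y).sub_const p).pow 2).const_mul L |>.div_const 2).congr_deriv (by ring)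
  refine image_norm_le_of_norm_deriv_right_le_deriv_boundary
    (f := fun y => F y - F p - F' p * (y - p)) (by fun_prop) (fun y hy => ?_) (by simp) hB hlip
    (right_mem_Icc.2 hpq)
  have hlin : HasDerivAt (fun y => F' p * (y - p)) (F' p) y := by
    simpa using ((hasDerivAt_id y).sub_const p).const_mul (F' p)
  exact ((hF' y hy).sub_const (F p)).sub hlin.hasDerivWithinAt

namespace IsFL

variable {L : ℝ} {f f' : ℝ → ℝ}

theorem continuousOn (hf : IsFL L f f') : ContinuousOn f (Ici 0) :=
  fun x hx => (hf.1 x hx).continuousWithinAt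

theorem hasDerivAt (hf : IsFL L f f') {x : ℝ} (hx : 0 < x) : HasDerivAt f (f' x) x :=
  (hf.1 x hx.le).hasDerivAt (Ici_mem_nhds hx)

theorem abs_sub_sub_mul_le (hf : IsFL L f f') {c x : ℝ} (hc : 0 ≤ c) (hx : 0 ≤ x) :
    |f x - f c - f' c * (x - c)| ≤ L * (x - c) ^ 2 / 2 := by
  rcases le_or_gt c x with hcx | hxc
  · refine abs_sub_sub_mul_le_of_hasDerivWithinAt_Ici hcx
      (hf.continuousOn.mono fun y hy => hc.trans hy.1)
      (fun y hy => (hf.1 y (hc.trans hy.1)).mono fun z hz => (hc.trans hy.1).trans hz)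
      (fun y hy => ?_)
    simpa [abs_of_nonneg (sub_nonneg.2 hy.1)] using hf.2 y (hc.trans hy.1) c hc
  -- for `x < c`, apply the right-sided estimate to the reflection `y ↦ f (-y)` on `[-c, -x]`
  have key := abs_sub_sub_mul_le_of_hasDerivWithinAt_Ici (F := fun y => f (-y))
    (F' := fun y => -f' (-y)) (L := L) (neg_le_neg hxc.le)
    (hf.continuousOn.comp continuousOn_neg fun y hy => hx.trans (le_neg.2 hy.2))
    (fun y hy => by
      have hy0 : 0 < -y := hx.trans_lt (lt_neg.2 hy.2)
      exact (((hf.hasDerivAt hy0).comp y (hasDerivAt_neg y)).congr_deriv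
        (by ring)).hasDerivWithinAt)
    (fun y hy => by
      have hy0 : 0 ≤ -y := hx.trans (lt_neg.2 hy.2).le
      calc |-f' (-y) - -f' (-(-c))| = |f' (-y) - f' c| := by rw [neg_neg, ← abs_neg]; ring_nf
        _ ≤ L * |-y - c| := hf.2 _ hy0 c hc
        _ = L * (y - -c) := by rw [abs_of_nonpos (by linarith [hy.1])]; ring)
  simp only [neg_neg] at key
  convert key using 2 <;> ring

end IsFL

/-- `Q(t, T, σ)`: the deviation of `u (t - σ)` from the secant of `u` through `t - T` and `t`. -/
noncomputable def secantResidual (u : ℝ → ℝ) (t T σ : ℝ) : ℝ :=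
  u (t - σ) - u t + (u t - u (t - T)) / T * σ

theorem secantResidual_add (f g : ℝ → ℝ) (t T σ : ℝ) :
    secantResidual (f + g) t T σ = secantResidual f t T σ + secantResidual g t T σ := by
  simp only [secantResidual, Pi.add_apply]
  ring

theorem IsFL.abs_secantResidual_le {L : ℝ} {f f' : ℝ → ℝ} (hf : IsFL L f f') {t T σ : ℝ}
    (hT : 0 < T) (hTt : T ≤ t) (hσ0 : 0 ≤ σ) (hσT : σ ≤ T) :
    |secantResidual f t T σ| ≤ L * σ * (T - σ) / 2 := by
  have hx : 0 ≤ t - σ := by linarith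
  have hb := hf.abs_sub_sub_mul_le hx (x := t) (by linarith)
  have ha := hf.abs_sub_sub_mul_le hx (x := t - T) (by linarith)
  set rb := f t - f (t - σ) - f' (t - σ) * (t - (t - σ))
  set ra := f (t - T) - f (t - σ) - f' (t - σ) * (t - T - (t - σ))
  -- Taylor expansion at the interior point `t - σ` towards both ends of the secant
  have hres : secantResidual f t T σ = -((T - σ) * rb + σ * ra) / T := by
    simp only [secantResidual, rb, ra]
    field_simp
    ring
  rw [hres, abs_div, abs_neg, abs_of_pos hT, div_le_iff₀ hT]
  calc |(T - σ) * rb + σ * ra| ≤ (T - σ) * |rb| + σ * |ra| := by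
        simpa [abs_mul, abs_of_nonneg hσ0, abs_of_nonneg (sub_nonneg.2 hσT)]
          using abs_add_le ((T - σ) * rb) (σ * ra)
    _ ≤ (T - σ) * (L * (t - (t - σ)) ^ 2 / 2) + σ * (L * (t - T - (t - σ)) ^ 2 / 2) := by
        gcongr
    _ = L * σ * (T - σ) / 2 * T := by ring

theorem abs_secantResidual_le_of_abs_le {η : ℝ → ℝ} {N t T σ : ℝ} (hT : 0 < T) (hσ0 : 0 ≤ σ)
    (hσT : σ ≤ T) (hη : ∀ s ∈ Icc (t - T) t, |η s| ≤ N) :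
    |secantResidual η t T σ| ≤ 2 * N := by
  set lam := σ / T
  have hlam0 : 0 ≤ lam := div_nonneg hσ0 hT.le
  have hlam1 : lam ≤ 1 := (div_le_one hT).2 hσT
  have hres : secantResidual η t T σ = η (t - σ) - ((1 - lam) * η t + lam * η (t - T)) := by
    simp only [secantResidual, lam]
    field_simp
    ring
  have h₁ := abs_le.1 (hη (t - σ) ⟨by linarith, by linarith⟩)
  have h₂ := abs_le.1 (hη t ⟨by linarith, le_rfl⟩)
  have h₃ := abs_le.1 (hη (t - T) ⟨le_rfl, by linarith⟩)
  rw [hres, abs_le]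
  constructor <;> nlinarith

/-- The quantities whose supremum is `2 N̂(t)`. -/
def noiseScores (L : ℝ) (Tbar : EReal) (u : ℝ → ℝ) (t : ℝ) : Set ℝ :=
  { v : ℝ | ∃ T σ : ℝ, 0 < T ∧ (T : EReal) ≤ Tbar ∧ T ≤ t ∧ 0 ≤ σ ∧ σ ≤ T ∧
    v = |secantResidual u t T σ| - L * σ * (T - σ) / 2 }

theorem le_two_mul_of_mem_noiseScores {L N : ℝ} {Tbar : EReal} {f f' η : ℝ → ℝ} {t v : ℝ}
    (hf : IsFL L f f') (hη : IsEN N η) (hv : v ∈ noiseScores L Tbar (f + η) t) :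
    v ≤ 2 * N := by
  obtain ⟨T, σ, hT, -, hTt, hσ0, hσT, rfl⟩ := hv
  have hfQ := hf.abs_secantResidual_le hT hTt hσ0 hσT
  have hηQ := abs_secantResidual_le_of_abs_le (t := t) hT hσ0 hσT
    fun s hs => hη.2 s (by linarith [hs.1] : 0 ≤ s)
  rw [secantResidual_add]
  linarith [abs_add_le (secantResidual f t T σ) (secantResidual η t T σ)]

theorem Filter.limsup_le_of_eventually_le_add {α : Type*} {l : Filter α} [l.NeBot]
    {φ g : α → ℝ} {M : ℝ} (hφ : IsBoundedUnder (· ≥ ·) l φ) (hg : Tendsto g l (𝓝 0))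
    (hle : ∀ᶠ x in l, φ x ≤ M + g x) : limsup φ l ≤ M := by
  have hMg : Tendsto (fun x => M + g x) l (𝓝 M) := by simpa using hg.const_add M
  calc limsup φ l ≤ limsup (fun x => M + g x) l :=
        limsup_le_limsup hle hφ.isCoboundedUnder_le hMg.isBoundedUnder_le
    _ = M := hMg.limsup_eq

theorem limsup_abs_sub_le_sSup_noiseScores {L : ℝ} {Tbar : EReal} {f η : ℝ → ℝ} {t t₀ : ℝ}
    (hf : ContinuousWithinAt f (Ioi t₀) t₀) (hbdd : BddAbove (noiseScores L Tbar (f + η) t))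
    (ht₀0 : 0 ≤ t₀) (ht₀t : t₀ < t) (hT : ((t - t₀ : ℝ) : EReal) ≤ Tbar) :
    limsup (fun τ => |η τ - η t₀|) (𝓝[>] t₀) ≤ sSup (noiseScores L Tbar (f + η) t) := by
  set u := f + η
  set T := t - t₀
  have hT0 : 0 < T := sub_pos.2 ht₀t
  set R : ℝ → ℝ := fun τ => (u t - u t₀) / T * (τ - t₀) - (f τ - f t₀)
  have hR : ContinuousWithinAt R (Ioi t₀) t₀ := by fun_prop
  refine limsup_le_of_eventually_le_add (g := fun τ => L * (t - τ) * (τ - t₀) / 2 + |R τ|)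
    (isBoundedUnder_of ⟨0, fun _ => abs_nonneg _⟩) ?_ ?_
  · have hg : ContinuousWithinAt (fun τ => L * (t - τ) * (τ - t₀) / 2 + |R τ|) (Ioi t₀) t₀ := by
      fun_prop
    simpa [R] using hg.tendsto
  filter_upwards [Ioo_mem_nhdsGT ht₀t] with τ hτ
  have hmem : |secantResidual u t T (t - τ)| - L * (t - τ) * (T - (t - τ)) / 2 ∈
      noiseScores L Tbar u t :=
    ⟨T, t - τ, hT0, hT, by linarith, by linarith [hτ.2], by linarith [hτ.1], rfl⟩
  have hle := le_csSup hbdd hmem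
  have hjump : η τ - η t₀ = secantResidual u t T (t - τ) + R τ := by
    have hT0' : t - t₀ ≠ 0 := hT0.ne'
    simp only [secantResidual, R, u, T, Pi.add_apply, sub_sub_cancel]
    field_simp
    ring
  have hTσ : T - (t - τ) = τ - t₀ := by ring
  rw [hTσ] at hle
  rw [hjump]
  linarith [abs_add_le (secantResidual u t T (t - τ)) (R τ)]

theorem EReal.coe_sub_le_of_sub_le {x y : ℝ} {z : EReal} (h : (x : EReal) - z ≤ y) :
    ((x - y : ℝ) : EReal) ≤ z := by
  rw [EReal.coe_sub]
  exact EReal.sub_le_of_le_add'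
    ((EReal.sub_le_iff_le_add (.inr (EReal.coe_ne_top y)) (.inr (EReal.coe_ne_bot y))).1 h)

theorem stmt11_general (L N : ℝ) (hN : 0 ≤ N)
    (Tbar : EReal)
    (f f' η u : ℝ → ℝ) (hf : IsFL L f f') (hη : IsEN N η) (hu : u = f + η)
    (t : ℝ)
    (Q : ℝ → ℝ → ℝ)
    (hQ : ∀ T σ : ℝ, Q T σ = u (t - σ) - u t + ((u t - u (t - T)) / T) * σ)
    (Nhat : ℝ)
    (hNhat : Nhat = (1/2) * sSup { v : ℝ | ∃ T σ : ℝ, 0 < T ∧ (T : EReal) ≤ Tbar ∧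
        T ≤ t ∧ 0 ≤ σ ∧ σ ≤ T ∧ v = |Q T σ| - L * σ * (T - σ) / 2 })
    (t₀ : ℝ) (ht₀0 : 0 ≤ t₀) (ht₀t : t₀ < t) (ht₀T : (t : EReal) - Tbar ≤ (t₀ : EReal)) :
    Filter.limsup (fun τ => |η τ - η t₀|) (𝓝[>] t₀) / 2 ≤ Nhat ∧ Nhat ≤ N := by
  obtain rfl : Q = secantResidual u t := funext₂ hQ
  subst hu
  change Nhat = 1 / 2 * sSup (noiseScores L Tbar (f + η) t) at hNhat
  have hbdd : BddAbove (noiseScores L Tbar (f + η) t) :=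
    ⟨2 * N, fun _ hv => le_two_mul_of_mem_noiseScores hf hη hv⟩
  have hlimsup := limsup_abs_sub_le_sSup_noiseScores (η := η)
    ((hf.continuousOn t₀ ht₀0).mono fun _ hτ => ht₀0.trans (le_of_lt hτ))
    hbdd ht₀0 ht₀t (EReal.coe_sub_le_of_sub_le ht₀T)
  have hsup : sSup (noiseScores L Tbar (f + η) t) ≤ 2 * N :=
    Real.sSup_le (fun _ hv => le_two_mul_of_mem_noiseScores hf hη hv) (by linarith)
  constructor <;> linarith

theorem stmt11 (L N : ℝ) (hL : 0 ≤ L) (hN : 0 ≤ N)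
    (Tbar : EReal) (hTbar : 0 < Tbar)
    (f f' η u : ℝ → ℝ) (hf : IsFL L f f') (hη : IsEN N η) (hu : u = f + η)
    (t : ℝ) (ht : 0 < t)
    (Q : ℝ → ℝ → ℝ)
    (hQ : ∀ T σ : ℝ, Q T σ = u (t - σ) - u t + ((u t - u (t - T)) / T) * σ)
    (Nhat : ℝ)
    (hNhat : Nhat = (1/2) * sSup { v : ℝ | ∃ T σ : ℝ, 0 < T ∧ (T : EReal) ≤ Tbar ∧
        T ≤ t ∧ 0 ≤ σ ∧ σ ≤ T ∧ v = |Q T σ| - L * σ * (T - σ) / 2 })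
    (t₀ : ℝ) (ht₀0 : 0 ≤ t₀) (ht₀t : t₀ < t) (ht₀T : (t : EReal) - Tbar ≤ (t₀ : EReal)) :
    Filter.limsup (fun τ => |η τ - η t₀|) (𝓝[>] t₀) / 2 ≤ Nhat ∧ Nhat ≤ N :=
  stmt11_general L N hN Tbar f f' η u hf hη hu t Q hQ Nhat hNhat t₀ ht₀0 ht₀t ht₀T
end

section
/- Let L ≥ 0, let u : [0,∞) → ℝ, and fix t > 0. For 0 < σ ≤ T ≤ t define Q(t, T, σ) = u(t − σ) − u(t) + ((u(t) − u(t − T))/T)·σ. Let μ ∈ (0, t] and suppose |Q(t, T, σ)| ≤ L·σ·(T − σ)/2 holds for all T ∈ (0, μ] and all σ ∈ [0, T]. Then the one-sided limit β = lim as T → 0⁺ of (u(t) − u(t − T))/T exists (as a finite real number). -/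
/-!
Writing `g T = (u t - u (t - T)) / T` for the backward difference quotient, the deviation from the
secant factors as `Q(t, T, σ) = σ · (g T - g σ)`. The bound on `Q` therefore says
`|g T - g σ| ≤ L (T - σ) / 2`, i.e. `g` is Lipschitz on `(0, μ]`; a uniformly continuous function
into a complete space has a limit at every point of the closure of its domain.
-/

open Set Filter Topology

theorem UniformContinuousOn.exists_tendsto_nhdsWithin {α β : Type*} [UniformSpace α]
    [UniformSpace β] [CompleteSpace β] {f : α → β} {s : Set α} (hf : UniformContinuousOn f s)
    {a : α} (ha : a ∈ closure s) : ∃ b, Tendsto f (𝓝[s] a) (𝓝 b) :=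
  haveI := mem_closure_iff_nhdsWithin_neBot.mp ha
  CompleteSpace.complete <|
    (cauchy_nhds.mono nhdsWithin_le_nhds).map_of_le hf inf_le_right

theorem LipschitzOnWith.of_abs_sub_le_mul_sub {g : ℝ → ℝ} {s : Set ℝ} {K : ℝ}
    (h : ∀ x ∈ s, ∀ y ∈ s, x ≤ y → |g y - g x| ≤ K * (y - x)) :
    LipschitzOnWith K.toNNReal g s := by
  refine LipschitzOnWith.of_dist_le' fun x hx y hy => ?_
  rcases le_total x y with hxy | hyx
  · rw [dist_comm, Real.dist_eq, dist_comm, Real.dist_eq, abs_of_nonneg (sub_nonneg.mpr hxy)]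
    exact h x hx y hy hxy
  · rw [Real.dist_eq, Real.dist_eq, abs_of_nonneg (sub_nonneg.mpr hyx)]
    exact h y hy x hx hyx

theorem secant_deviation_eq_mul_sub_slope (u : ℝ → ℝ) (t T : ℝ) {σ : ℝ} (hσ : σ ≠ 0) :
    u (t - σ) - u t + (u t - u (t - T)) / T * σ =
      σ * ((u t - u (t - T)) / T - (u t - u (t - σ)) / σ) := by
  field_simp
  ring

theorem abs_sub_slope_le_of_abs_secant_deviation_le (u : ℝ → ℝ) {t T σ L : ℝ} (hσ : 0 < σ)
    (h : |u (t - σ) - u t + (u t - u (t - T)) / T * σ| ≤ L * σ * (T - σ) / 2) :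
    |(u t - u (t - T)) / T - (u t - u (t - σ)) / σ| ≤ L / 2 * (T - σ) := by
  rw [secant_deviation_eq_mul_sub_slope u t T hσ.ne', abs_mul, abs_of_pos hσ] at h
  exact le_of_mul_le_mul_left (by linarith) hσ

theorem stmt12_general (L : ℝ) (u : ℝ → ℝ) (t : ℝ)
    (Q : ℝ → ℝ → ℝ)
    (hQ : ∀ T σ : ℝ, Q T σ = u (t - σ) - u t + ((u t - u (t - T)) / T) * σ)
    (μ : ℝ) (hμ : μ ∈ Set.Ioc (0:ℝ) t)
    (hbound : ∀ T : ℝ, 0 < T → T ≤ μ → ∀ σ ∈ Set.Icc (0:ℝ) T,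
      |Q T σ| ≤ L * σ * (T - σ) / 2) :
    ∃ β : ℝ, Filter.Tendsto (fun T => (u t - u (t - T)) / T) (𝓝[>] 0) (𝓝 β) := by
  have hlip : LipschitzOnWith (L / 2).toNNReal (fun T => (u t - u (t - T)) / T) (Ioc 0 μ) :=
    LipschitzOnWith.of_abs_sub_le_mul_sub fun σ hσ T hT hσT =>
      abs_sub_slope_le_of_abs_secant_deviation_le u hσ.1 <|
        hQ T σ ▸ hbound T (hσ.1.trans_le hσT) hT.2 σ ⟨hσ.1.le, hσT⟩
  have hzero : (0 : ℝ) ∈ closure (Ioc 0 μ) := by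
    rw [closure_Ioc hμ.1.ne]
    exact left_mem_Icc.mpr hμ.1.le
  rw [← nhdsWithin_Ioc_eq_nhdsGT hμ.1]
  exact hlip.uniformContinuousOn.exists_tendsto_nhdsWithin hzero

theorem stmt12 (L : ℝ) (hL : 0 ≤ L) (u : ℝ → ℝ) (t : ℝ) (ht : 0 < t)
    (Q : ℝ → ℝ → ℝ)
    (hQ : ∀ T σ : ℝ, Q T σ = u (t - σ) - u t + ((u t - u (t - T)) / T) * σ)
    (μ : ℝ) (hμ : μ ∈ Set.Ioc (0:ℝ) t)
    (hbound : ∀ T : ℝ, 0 < T → T ≤ μ → ∀ σ ∈ Set.Icc (0:ℝ) T,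
      |Q T σ| ≤ L * σ * (T - σ) / 2) :
    ∃ β : ℝ, Filter.Tendsto (fun T => (u t - u (t - T)) / T) (𝓝[>] 0) (𝓝 β) :=
  stmt12_general L u t Q hQ μ hμ hbound
end

section
/- Let L ≥ 0, let u : [0,∞) → ℝ, fix t > 0 and μ ∈ (0, t], and define Q(t, T, σ) = u(t − σ) − u(t) + ((u(t) − u(t − T))/T)·σ. Suppose |Q(t, T, σ)| ≤ L·σ·(T − σ)/2 holds for all T ∈ (0, μ] and all σ ∈ [0, T], and let β = lim as T → 0⁺ of (u(t) − u(t − T))/T (which exists under these hypotheses). Then |u(t − σ) + β·σ − u(t)| ≤ L·σ²/2 holds for all σ ∈ [0, μ]. -/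
open Set Filter Topology

/-!
Writing `D s = (u t - u (t - s)) / s` for the backward secant slopes at `t`, one has
`Q T s = s * (D T - D s)`, so the hypothesis says `|D T - D s| ≤ L (T - s) / 2` for
`0 < s ≤ T`. Letting `s → 0⁺` gives `|D T - β| ≤ L T / 2`, and
`u (t - T) + β T - u t = T (β - D T)`.
-/

noncomputable def backwardSlope (u : ℝ → ℝ) (t T : ℝ) : ℝ := (u t - u (t - T)) / T

lemma sub_add_mul_eq_mul_sub_backwardSlope (u : ℝ → ℝ) (t c : ℝ) {s : ℝ} (hs : s ≠ 0) :
    u (t - s) - u t + c * s = s * (c - backwardSlope u t s) := by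
  unfold backwardSlope
  field_simp
  ring

lemma abs_sub_le_of_tendsto_nhdsGT {f : ℝ → ℝ} {a x β K : ℝ}
    (hf : Tendsto f (𝓝[>] a) (𝓝 β)) (hax : a < x)
    (h : ∀ s ∈ Ioc a x, |f x - f s| ≤ K * (x - s)) :
    |f x - β| ≤ K * (x - a) := by
  have hlhs : Tendsto (fun s => |f x - f s|) (𝓝[>] a) (𝓝 |f x - β|) :=
    (tendsto_const_nhds.sub hf).abs
  have hrhs : Tendsto (fun s => K * (x - s)) (𝓝[>] a) (𝓝 (K * (x - a))) :=
    ((continuous_const.mul (continuous_const.sub continuous_id)).tendsto a).mono_left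
      nhdsWithin_le_nhds
  exact le_of_tendsto_of_tendsto hlhs hrhs <| by
    filter_upwards [Ioc_mem_nhdsGT hax] with s hs using h s hs

lemma abs_backwardSlope_sub_le {u : ℝ → ℝ} {t T L : ℝ}
    (hdev : ∀ s ∈ Icc 0 T, |u (t - s) - u t + backwardSlope u t T * s| ≤ L * s * (T - s) / 2)
    {s : ℝ} (hs : s ∈ Ioc 0 T) :
    |backwardSlope u t T - backwardSlope u t s| ≤ L / 2 * (T - s) := by
  have h := hdev s (Ioc_subset_Icc_self hs)
  rw [sub_add_mul_eq_mul_sub_backwardSlope u t _ hs.1.ne', abs_mul, abs_of_pos hs.1] at h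
  rw [← mul_le_mul_iff_of_pos_left hs.1]
  linarith

lemma abs_sub_add_mul_le_of_tendsto_backwardSlope {u : ℝ → ℝ} {t T L β : ℝ} (hT : 0 < T)
    (hdev : ∀ s ∈ Icc 0 T, |u (t - s) - u t + backwardSlope u t T * s| ≤ L * s * (T - s) / 2)
    (hβ : Tendsto (backwardSlope u t) (𝓝[>] 0) (𝓝 β)) :
    |u (t - T) + β * T - u t| ≤ L * T ^ 2 / 2 := by
  have hslope : |backwardSlope u t T - β| ≤ L / 2 * T := by
    simpa only [sub_zero] using
      abs_sub_le_of_tendsto_nhdsGT hβ hT fun s hs => abs_backwardSlope_sub_le hdev hs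
  have h := sub_add_mul_eq_mul_sub_backwardSlope u t β hT.ne'
  rw [show u (t - T) + β * T - u t = u (t - T) - u t + β * T by ring, h, abs_mul, abs_of_pos hT,
    abs_sub_comm]
  calc T * |backwardSlope u t T - β| ≤ T * (L / 2 * T) := by gcongr
    _ = L * T ^ 2 / 2 := by ring

theorem stmt13_general (L : ℝ) (u : ℝ → ℝ) (t : ℝ)
    (Q : ℝ → ℝ → ℝ)
    (hQ : ∀ T σ : ℝ, Q T σ = u (t - σ) - u t + ((u t - u (t - T)) / T) * σ)
    (μ : ℝ)
    (hbound : ∀ T : ℝ, 0 < T → T ≤ μ → ∀ σ ∈ Set.Icc (0:ℝ) T,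
      |Q T σ| ≤ L * σ * (T - σ) / 2)
    (β : ℝ)
    (hβ : Filter.Tendsto (fun T => (u t - u (t - T)) / T) (𝓝[>] 0) (𝓝 β)) :
    ∀ σ ∈ Set.Icc (0:ℝ) μ, |u (t - σ) + β * σ - u t| ≤ L * σ ^ 2 / 2 := by
  rintro σ ⟨hσ0, hσμ⟩
  rcases hσ0.eq_or_lt with rfl | hσ
  · simp
  refine abs_sub_add_mul_le_of_tendsto_backwardSlope hσ (fun s hs => ?_) hβ
  simpa only [hQ, backwardSlope] using hbound σ hσ hσμ s hs

theorem stmt13 (L : ℝ) (hL : 0 ≤ L) (u : ℝ → ℝ) (t : ℝ) (ht : 0 < t)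
    (Q : ℝ → ℝ → ℝ)
    (hQ : ∀ T σ : ℝ, Q T σ = u (t - σ) - u t + ((u t - u (t - T)) / T) * σ)
    (μ : ℝ) (hμ : μ ∈ Set.Ioc (0:ℝ) t)
    (hbound : ∀ T : ℝ, 0 < T → T ≤ μ → ∀ σ ∈ Set.Icc (0:ℝ) T,
      |Q T σ| ≤ L * σ * (T - σ) / 2)
    (β : ℝ)
    (hβ : Filter.Tendsto (fun T => (u t - u (t - T)) / T) (𝓝[>] 0) (𝓝 β)) :
    ∀ σ ∈ Set.Icc (0:ℝ) μ, |u (t - σ) + β * σ - u t| ≤ L * σ ^ 2 / 2 :=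
  stmt13_general L u t Q hQ μ hbound β hβ
end

section
/- Let L > 0 and N̂ > 0, let u : [0,∞) → ℝ, and fix t > 0. Let T̂ ≥ 2·√(N̂/L), define β = (u(t) − u(t − T̂))/T̂ and Q(t, T, σ) = u(t − σ) − u(t) + ((u(t) − u(t − T))/T)·σ. Suppose that for some σ̂ ∈ [T̂, t] the inequality |Q(t, σ̂, T̂)| ≤ 2·N̂ + L·T̂·(σ̂ − T̂)/2 holds. Then |u(t − σ̂) + β·σ̂ − u(t)| ≤ L·σ̂²/2. -/
open Set Filter Topology

theorem stmt14 (L Nhat : ℝ) (hL : 0 < L) (hNhat : 0 < Nhat)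
    (u : ℝ → ℝ) (t : ℝ) (ht : 0 < t)
    (That : ℝ) (hThat : 2 * Real.sqrt (Nhat / L) ≤ That)
    (β : ℝ) (hβ : β = (u t - u (t - That)) / That)
    (Q : ℝ → ℝ → ℝ)
    (hQ : ∀ T σ : ℝ, Q T σ = u (t - σ) - u t + ((u t - u (t - T)) / T) * σ)
    (σhat : ℝ) (hσhat : σhat ∈ Set.Icc That t)
    (hbound : |Q σhat That| ≤ 2 * Nhat + L * That * (σhat - That) / 2) :
    |u (t - σhat) + β * σhat - u t| ≤ L * σhat ^ 2 / 2 := by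
  have hNL : 0 < Nhat / L := div_pos hNhat hL
  have hs : 0 < Real.sqrt (Nhat / L) := Real.sqrt_pos.mpr hNL
  have hT : 0 < That := lt_of_lt_of_le (by linarith) hThat
  have hσ : 0 < σhat := lt_of_lt_of_le hT hσhat.1
  have hTσ : That ≤ σhat := hσhat.1
  have hT2 : 4 * (Nhat / L) ≤ That ^ 2 := by
    nlinarith [Real.sq_sqrt hNL.le, Real.sqrt_nonneg (Nhat / L)]
  have h2N : 2 * Nhat ≤ L * That ^ 2 / 2 := by
    have hc : Nhat / L * L = Nhat := div_mul_cancel₀ _ hL.ne'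
    nlinarith
  have hkey : u (t - σhat) + β * σhat - u t = -(σhat / That) * Q σhat That := by
    rw [hQ, hβ]; field_simp; ring
  rw [hkey, abs_mul, abs_neg, abs_of_pos (div_pos hσ hT)]
  have h1 : σhat / That * |Q σhat That| ≤
      σhat / That * (2 * Nhat + L * That * (σhat - That) / 2) :=
    mul_le_mul_of_nonneg_left hbound (div_pos hσ hT).le
  refine h1.trans ?_
  rw [div_mul_eq_mul_div, div_le_iff₀ hT]
  nlinarith
end

section
/- Let L > 0, T̄ ∈ (0,∞], and let f ∈ F_L be a noise-free input, u = f. Define Q(t, T, σ) = u(t − σ) − u(t) + ((u(t) − u(t − T))/T)·σ and the noise estimate N̂(t) = (1/2)·sup over T ∈ (0, T̄] with T ≤ t and σ ∈ [0, T] of (|Q(t, T, σ)| − L·σ·(T − σ)/2). Then for every t > 0: N̂(t) = 0, and the one-sided difference quotient (u(t) − u(t − T))/T converges to ḟ(t) as T → 0⁺; hence the proposed adaptive differentiator (whose output for N̂(t) = 0 is this limit) is exact from the beginning over F_L: its output equals ḟ(t) for every t > 0. -/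
open Set Filter Topology

open intervalIntegral

lemma contOn_aux (L : ℝ) (f f' : ℝ → ℝ) (hf : IsFL L f f') :
    ContinuousOn f' (Set.Ici (0:ℝ)) := by
  apply LipschitzOnWith.continuousOn (K := Real.toNNReal L)
  apply LipschitzOnWith.of_dist_le_mul
  intro a ha b hb
  rw [Real.dist_eq, Real.dist_eq]
  calc |f' a - f' b| ≤ L * |a - b| := hf.2 a ha b hb
    _ ≤ (Real.toNNReal L) * |a - b| :=
        mul_le_mul_of_nonneg_right (Real.le_coe_toNNReal L) (abs_nonneg _)

lemma ftc_aux (L : ℝ) (f f' : ℝ → ℝ) (hf : IsFL L f f') (x y : ℝ)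
    (hx : 0 ≤ x) (hxy : x ≤ y) : f y - f x = ∫ s in x..y, f' s := by
  have hIcc : Set.Icc x y ⊆ Set.Ici (0:ℝ) := fun z hz => le_trans hx hz.1
  symm
  apply intervalIntegral.integral_eq_sub_of_hasDeriv_right_of_le hxy
  · exact fun s hs => ((hf.1 s (hIcc hs)).continuousWithinAt).mono hIcc
  · intro s hs
    have hs0 : 0 < s := lt_of_le_of_lt hx hs.1
    exact (((hf.1 s (le_of_lt hs0)).hasDerivAt (Ici_mem_nhds hs0)).hasDerivWithinAt)
  · exact ((contOn_aux L f f' hf).mono (fun z hz => by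
      rw [Set.uIcc_of_le hxy] at hz; exact hIcc hz)).intervalIntegrable

lemma taylor_aux (L : ℝ) (hL : 0 ≤ L) (f f' : ℝ → ℝ) (hf : IsFL L f f') (x y : ℝ)
    (hx : 0 ≤ x) (hy : 0 ≤ y) :
    |f y - f x - f' x * (y - x)| ≤ L / 2 * (y - x) ^ 2 := by
  rcases le_total x y with h | h
  · have hint : IntervalIntegrable f' MeasureTheory.volume x y :=
      ((contOn_aux L f f' hf).mono (fun z hz => by
        rw [Set.uIcc_of_le h] at hz; exact le_trans hx hz.1)).intervalIntegrable
    have hintc : IntervalIntegrable (fun _ : ℝ => f' x) MeasureTheory.volume x y :=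
      intervalIntegrable_const
    have hkey : f y - f x - f' x * (y - x) = ∫ s in x..y, (f' s - f' x) := by
      rw [intervalIntegral.integral_sub hint hintc, intervalIntegral.integral_const,
        ← ftc_aux L f f' hf x y hx h, smul_eq_mul]
      ring
    rw [hkey]
    have hb : IntervalIntegrable (fun s => L * (s - x)) MeasureTheory.volume x y :=
      (Continuous.intervalIntegrable (by continuity) _ _)
    calc |∫ s in x..y, (f' s - f' x)| ≤ ∫ s in x..y, |f' s - f' x| :=
          intervalIntegral.abs_integral_le_integral_abs h
      _ ≤ ∫ s in x..y, L * (s - x) := by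
          apply intervalIntegral.integral_mono_on h (hint.sub hintc).abs hb
          intro s hs
          calc |f' s - f' x| ≤ L * |s - x| := hf.2 s (le_trans hx hs.1) x hx
            _ = L * (s - x) := by rw [abs_of_nonneg (by linarith [hs.1])]
      _ = L / 2 * (y - x) ^ 2 := by
          rw [intervalIntegral.integral_const_mul,
            intervalIntegral.integral_sub intervalIntegrable_id intervalIntegrable_const,
            integral_id, intervalIntegral.integral_const, smul_eq_mul]
          ring
  · have hint : IntervalIntegrable f' MeasureTheory.volume y x :=
      ((contOn_aux L f f' hf).mono (fun z hz => by
        rw [Set.uIcc_of_le h] at hz; exact le_trans hy hz.1)).intervalIntegrable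
    have hintc : IntervalIntegrable (fun _ : ℝ => f' x) MeasureTheory.volume y x :=
      intervalIntegrable_const
    have hkey : f y - f x - f' x * (y - x) = -∫ s in y..x, (f' s - f' x) := by
      rw [intervalIntegral.integral_sub hint hintc, intervalIntegral.integral_const,
        ← ftc_aux L f f' hf y x hy h, smul_eq_mul]
      ring
    rw [hkey, abs_neg]
    have hb : IntervalIntegrable (fun s => L * (x - s)) MeasureTheory.volume y x :=
      (Continuous.intervalIntegrable (by continuity) _ _)
    calc |∫ s in y..x, (f' s - f' x)| ≤ ∫ s in y..x, |f' s - f' x| :=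
          intervalIntegral.abs_integral_le_integral_abs h
      _ ≤ ∫ s in y..x, L * (x - s) := by
          apply intervalIntegral.integral_mono_on h (hint.sub hintc).abs hb
          intro s hs
          calc |f' s - f' x| ≤ L * |s - x| := hf.2 s (le_trans hy hs.1) x hx
            _ = L * (x - s) := by rw [abs_of_nonpos (by linarith [hs.2]), neg_sub]
      _ = L / 2 * (y - x) ^ 2 := by
          rw [intervalIntegral.integral_const_mul,
            intervalIntegral.integral_sub intervalIntegrable_const intervalIntegrable_id,
            integral_id, intervalIntegral.integral_const, smul_eq_mul]
          ring


set_option maxHeartbeats 1000000 in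
theorem stmt16 (L : ℝ) (hL : 0 < L)
    (Tbar : EReal) (hTbar : 0 < Tbar)
    (f f' u : ℝ → ℝ) (hf : IsFL L f f') (hu : u = f)
    (Nhat : ℝ → ℝ)
    (hNhat : ∀ t : ℝ, Nhat t = (1/2) * sSup { v : ℝ | ∃ T σ : ℝ, 0 < T ∧
        (T : EReal) ≤ Tbar ∧ T ≤ t ∧ 0 ≤ σ ∧ σ ≤ T ∧
        v = |u (t - σ) - u t + ((u t - u (t - T)) / T) * σ| - L * σ * (T - σ) / 2 }) :
    ∀ t : ℝ, 0 < t → Nhat t = 0 ∧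
      Filter.Tendsto (fun T => (u t - u (t - T)) / T) (𝓝[>] 0) (𝓝 (f' t)) := by
  subst hu
  intro t ht
  constructor
  · -- Nhat t = 0
    rw [hNhat t]
    have hub : ∀ v ∈ { v : ℝ | ∃ T σ : ℝ, 0 < T ∧
        (T : EReal) ≤ Tbar ∧ T ≤ t ∧ 0 ≤ σ ∧ σ ≤ T ∧
        v = |u (t - σ) - u t + ((u t - u (t - T)) / T) * σ| - L * σ * (T - σ) / 2 },
        v ≤ 0 := by
      rintro v ⟨T, σ, hT, hTb, hTt, hσ, hσT, rfl⟩
      have ha0 : (0:ℝ) ≤ t - T := by linarith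
      have hx0 : (0:ℝ) ≤ t - σ := by linarith
      have ht0 : (0:ℝ) ≤ t := le_of_lt ht
      set Ra := u (t - T) - u (t - σ) - f' (t - σ) * ((t - T) - (t - σ)) with hRa
      set Rb := u t - u (t - σ) - f' (t - σ) * (t - (t - σ)) with hRb
      have hRaB : |Ra| ≤ L / 2 * (T - σ)^2 := by
        have := taylor_aux L (le_of_lt hL) u f' hf (t - σ) (t - T) hx0 ha0
        calc |Ra| ≤ L / 2 * ((t - T) - (t - σ))^2 := this
          _ = L / 2 * (T - σ)^2 := by ring
      have hRbB : |Rb| ≤ L / 2 * σ^2 := by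
        have := taylor_aux L (le_of_lt hL) u f' hf (t - σ) t hx0 ht0
        calc |Rb| ≤ L / 2 * (t - (t - σ))^2 := this
          _ = L / 2 * σ^2 := by ring
      have hQ : u (t - σ) - u t + ((u t - u (t - T)) / T) * σ
          = -(Rb * (T - σ) + Ra * σ) / T := by
        rw [hRa, hRb]
        field_simp
        ring
      have hbound : |u (t - σ) - u t + ((u t - u (t - T)) / T) * σ|
          ≤ L * σ * (T - σ) / 2 := by
        rw [hQ, abs_div, abs_neg, abs_of_pos hT, div_le_iff₀ hT]
        calc |Rb * (T - σ) + Ra * σ| ≤ |Rb| * (T - σ) + |Ra| * σ := by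
              calc |Rb * (T - σ) + Ra * σ| ≤ |Rb * (T - σ)| + |Ra * σ| := abs_add_le _ _
                _ = |Rb| * (T - σ) + |Ra| * σ := by
                    rw [abs_mul, abs_mul, abs_of_nonneg (by linarith : (0:ℝ) ≤ T - σ),
                      abs_of_nonneg hσ]
          _ ≤ (L / 2 * σ^2) * (T - σ) + (L / 2 * (T - σ)^2) * σ :=
              add_le_add (mul_le_mul_of_nonneg_right hRbB (by linarith))
                (mul_le_mul_of_nonneg_right hRaB hσ)
          _ = L * σ * (T - σ) / 2 * T := by ring
      linarith
    have hmem : (0:ℝ) ∈ { v : ℝ | ∃ T σ : ℝ, 0 < T ∧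
        (T : EReal) ≤ Tbar ∧ T ≤ t ∧ 0 ≤ σ ∧ σ ≤ T ∧
        v = |u (t - σ) - u t + ((u t - u (t - T)) / T) * σ| - L * σ * (T - σ) / 2 } := by
      obtain ⟨r, hr0, hrT⟩ := EReal.lt_iff_exists_real_btwn.mp hTbar
      have hr0' : (0:ℝ) < r := by exact_mod_cast hr0
      refine ⟨min t r, 0, lt_min ht hr0', ?_, min_le_left _ _, le_refl 0,
        le_of_lt (lt_min ht hr0'), ?_⟩
      · calc ((min t r : ℝ) : EReal) ≤ (r : EReal) := by exact_mod_cast min_le_right t r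
          _ ≤ Tbar := le_of_lt hrT
      · norm_num
    rw [le_antisymm (Real.sSup_le hub le_rfl) (le_csSup ⟨0, hub⟩ hmem)]
    norm_num
  · -- the limit
    have hd : HasDerivAt u (f' t) t :=
      (hf.1 t (le_of_lt ht)).hasDerivAt (Ici_mem_nhds ht)
    have hslope := hasDerivAt_iff_tendsto_slope.mp hd
    have hg : Filter.Tendsto (fun T => t - T) (𝓝[>] (0:ℝ)) (𝓝[≠] t) := by
      rw [tendsto_nhdsWithin_iff]
      constructor
      · have : Filter.Tendsto (fun T : ℝ => t - T) (𝓝 (0:ℝ)) (𝓝 t) := by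
          have h2 : Continuous (fun T : ℝ => t - T) := continuous_const.sub continuous_id
          simpa using h2.tendsto (0:ℝ)
        exact this.mono_left nhdsWithin_le_nhds
      · filter_upwards [self_mem_nhdsWithin] with T hT
        simp only [Set.mem_compl_iff, Set.mem_singleton_iff]
        intro h
        have : T = 0 := by linarith [sub_eq_self.mp h]
        exact absurd this (ne_of_gt hT)
    have := hslope.comp hg
    apply this.congr'
    filter_upwards [self_mem_nhdsWithin] with T hT
    have hT0 : T ≠ 0 := ne_of_gt hT
    simp only [Function.comp_apply, slope_def_field]
    rw [div_eq_div_iff (by intro h; apply hT0; linarith [sub_eq_zero.mp h] : t - T - t ≠ 0) hT0]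
    ring
end

section
/- Let L > 0, γ̄ ∈ [1, 1 + √2], T̄ ∈ (0,∞], and let γ : [0,∞) → [1, γ̄]. Let N ∈ (0, L·T̄²/2), f ∈ F_L, η ∈ E_N, u = f + η. For t > 0 define Q(t, T, σ) = u(t − σ) − u(t) + ((u(t) − u(t − T))/T)·σ, the noise estimate N̂(t) = (1/2)·sup over T ∈ (0, T̄] with T ≤ t and σ ∈ [0, T] of (|Q(t, T, σ)| − L·σ·(T − σ)/2), and the adaptive time difference T̂(t) = min{t, T̄, 2·γ(t)·√(N̂(t)/L)}. Then for every t ≥ √(2N/L) with T̂(t) > 0, the output y(t) = (u(t) − u(t − T̂(t)))/T̂(t) satisfies |y(t) − ḟ(t)| ≤ 2·√(2·N·L). -/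
open Set Filter Topology

/-!
For `f ∈ F_L` the functions `f + L x²/2` and `L x²/2 - f` are convex on `[0, ∞)`. Their secant
slopes give the Taylor bound `|D_T f(t) - ḟ(t)| ≤ L T / 2` for the backward difference quotient
`D_T u(t) = (u(t) - u(t - T)) / T`, and their chords give the interpolation bound
`|Q_f(t, T, σ)| ≤ L σ (T - σ) / 2`; the noise adds at most `2N / T`, resp. `2N`.
Hence `N̂(t) ≤ N`, and with `τ = √(2N/L)`, the minimiser of `L T / 2 + 2N / T`, every
`T ∈ [τ, (2 + √2) τ]` has error at most `2 L τ = 2 √(2 N L)`. If `T̂ < τ`, then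
`T̂ = 2 γ √(N̂ / L)`, and the sample `(τ, T̂)` in the definition of `N̂` bounds
`|D_{T̂} u(t) - D_τ u(t)|` by `(2 N̂ + L T̂ (τ - T̂) / 2) / T̂ ≤ L τ / 2`.
-/

noncomputable def backwardDiff (u : ℝ → ℝ) (t T : ℝ) : ℝ := (u t - u (t - T)) / T

/-- The quantity `Q(t, T, σ)` of the noise estimate. -/
noncomputable def secantGap (u : ℝ → ℝ) (t T σ : ℝ) : ℝ :=
  u (t - σ) - u t + backwardDiff u t T * σ

def noiseSamples (L : ℝ) (Tbar : EReal) (u : ℝ → ℝ) (t : ℝ) : Set ℝ :=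
  { v | ∃ T σ : ℝ, 0 < T ∧ (T : EReal) ≤ Tbar ∧ T ≤ t ∧ 0 ≤ σ ∧ σ ≤ T ∧
    v = |secantGap u t T σ| - L * σ * (T - σ) / 2 }

noncomputable def noiseEstimate (L : ℝ) (Tbar : EReal) (u : ℝ → ℝ) (t : ℝ) : ℝ :=
  (1 / 2) * sSup (noiseSamples L Tbar u t)

lemma backwardDiff_add (f g : ℝ → ℝ) (t T : ℝ) :
    backwardDiff (f + g) t T = backwardDiff f t T + backwardDiff g t T := by
  simp only [backwardDiff, Pi.add_apply]
  ring

lemma secantGap_add (f g : ℝ → ℝ) (t T σ : ℝ) :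
    secantGap (f + g) t T σ = secantGap f t T σ + secantGap g t T σ := by
  simp only [secantGap, backwardDiff_add, Pi.add_apply]
  ring

lemma secantGap_eq_mul_sub (u : ℝ → ℝ) (t T : ℝ) {σ : ℝ} (hσ : σ ≠ 0) :
    secantGap u t T σ = σ * (backwardDiff u t T - backwardDiff u t σ) := by
  simp only [secantGap, backwardDiff]
  field_simp
  ring

lemma abs_backwardDiff_sub_le_add (u : ℝ → ℝ) (t T d : ℝ) {σ : ℝ} (hσ : 0 < σ) :
    |backwardDiff u t σ - d| ≤ |backwardDiff u t T - d| + |secantGap u t T σ| / σ := by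
  rw [secantGap_eq_mul_sub u t T hσ.ne', abs_mul, abs_of_pos hσ,
    mul_div_cancel_left₀ _ hσ.ne']
  linarith [abs_sub_le (backwardDiff u t σ) (backwardDiff u t T) d,
    abs_sub_comm (backwardDiff u t σ) (backwardDiff u t T)]

lemma convexOn_of_hasDerivWithinAt_of_monotoneOn {D : Set ℝ} (hD : Convex ℝ D)
    {g g' : ℝ → ℝ} (hg : ∀ x ∈ D, HasDerivWithinAt g (g' x) D x) (hg' : MonotoneOn g' D) :
    ConvexOn ℝ D g := by
  have hderiv : ∀ x ∈ interior D, HasDerivAt g (g' x) x := fun x hx =>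
    (hg x (interior_subset hx)).hasDerivAt (mem_interior_iff_mem_nhds.mp hx)
  refine MonotoneOn.convexOn_of_deriv hD (fun x hx => (hg x hx).continuousWithinAt)
    (fun x hx => (hderiv x hx).differentiableAt.differentiableWithinAt) ?_
  intro x hx y hy hxy
  rw [(hderiv x hx).deriv, (hderiv y hy).deriv]
  exact hg' (interior_subset hx) (interior_subset hy) hxy

lemma ConvexOn.sub_mul_le_of_mem_Icc {s : Set ℝ} {φ : ℝ → ℝ} (hφ : ConvexOn ℝ s φ)
    {a b x : ℝ} (ha : a ∈ s) (hb : b ∈ s) (hx : x ∈ Icc a b) :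
    (b - a) * φ x ≤ (b - x) * φ a + (x - a) * φ b := by
  rcases hx.1.eq_or_lt with rfl | hax
  · exact le_of_eq (by ring)
  rcases hx.2.eq_or_lt with rfl | hxb
  · exact le_of_eq (by ring)
  exact hφ.secant_mono_aux1 ha hb hax hxb

namespace IsFL

variable {L : ℝ} {f f' : ℝ → ℝ}

lemma hasDerivWithinAt_add_sq (hf : IsFL L f f') {x : ℝ} (hx : x ∈ Ici (0 : ℝ)) :
    HasDerivWithinAt (fun x => f x + L / 2 * x ^ 2) (f' x + L * x) (Ici 0) x := by
  refine ((hf.1 x hx).add ((hasDerivAt_pow 2 x).const_mul (L / 2)).hasDerivWithinAt).congr_deriv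
    ?_
  norm_num
  ring

lemma hasDerivWithinAt_sq_sub (hf : IsFL L f f') {x : ℝ} (hx : x ∈ Ici (0 : ℝ)) :
    HasDerivWithinAt (fun x => L / 2 * x ^ 2 - f x) (L * x - f' x) (Ici 0) x := by
  refine (((hasDerivAt_pow 2 x).const_mul (L / 2)).hasDerivWithinAt.sub (hf.1 x hx)).congr_deriv
    ?_
  norm_num
  ring

lemma convexOn_add_sq (hf : IsFL L f f') : ConvexOn ℝ (Ici 0) fun x => f x + L / 2 * x ^ 2 := by
  refine convexOn_of_hasDerivWithinAt_of_monotoneOn (convex_Ici 0)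
    (fun x hx => hf.hasDerivWithinAt_add_sq hx) fun x hx y hy hxy => ?_
  have := hf.2 x hx y hy
  rw [abs_sub_comm x y, abs_of_nonneg (sub_nonneg.2 hxy)] at this
  linarith [le_abs_self (f' x - f' y)]

lemma convexOn_sq_sub (hf : IsFL L f f') : ConvexOn ℝ (Ici 0) fun x => L / 2 * x ^ 2 - f x := by
  refine convexOn_of_hasDerivWithinAt_of_monotoneOn (convex_Ici 0)
    (fun x hx => hf.hasDerivWithinAt_sq_sub hx) fun x hx y hy hxy => ?_
  have := hf.2 x hx y hy
  rw [abs_sub_comm x y, abs_of_nonneg (sub_nonneg.2 hxy)] at this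
  linarith [neg_abs_le (f' x - f' y)]

lemma abs_backwardDiff_sub_le (hf : IsFL L f f') {t T : ℝ} (hT : 0 < T) (hTt : T ≤ t) :
    |backwardDiff f t T - f' t| ≤ L * T / 2 := by
  have ha : t - T ∈ Ici (0 : ℝ) := sub_nonneg.2 hTt
  have hb : t ∈ Ici (0 : ℝ) := hT.le.trans hTt
  have hab : t - T < t := by linarith
  have h₁ := hf.convexOn_add_sq.slope_le_of_hasDerivWithinAt ha hb hab
    (hf.hasDerivWithinAt_add_sq hb)
  have h₂ := hf.convexOn_sq_sub.slope_le_of_hasDerivWithinAt ha hb hab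
    (hf.hasDerivWithinAt_sq_sub hb)
  have e₁ : slope (fun x => f x + L / 2 * x ^ 2) (t - T) t =
      backwardDiff f t T + L * t - L * T / 2 := by
    rw [slope_def_field, backwardDiff, sub_sub_cancel]
    field_simp
    ring
  have e₂ : slope (fun x => L / 2 * x ^ 2 - f x) (t - T) t =
      L * t - L * T / 2 - backwardDiff f t T := by
    rw [slope_def_field, backwardDiff, sub_sub_cancel]
    field_simp
    ring
  rw [abs_le]
  constructor <;> linarith

lemma abs_secantGap_le (hf : IsFL L f f') {t T σ : ℝ} (hT : 0 < T) (hTt : T ≤ t)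
    (hσ : σ ∈ Icc 0 T) : |secantGap f t T σ| ≤ L * σ * (T - σ) / 2 := by
  have ha : t - T ∈ Ici (0 : ℝ) := sub_nonneg.2 hTt
  have hb : t ∈ Ici (0 : ℝ) := hT.le.trans hTt
  have hx : t - σ ∈ Icc (t - T) t := ⟨by linarith [hσ.2], by linarith [hσ.1]⟩
  have h₁ := hf.convexOn_add_sq.sub_mul_le_of_mem_Icc ha hb hx
  have h₂ := hf.convexOn_sq_sub.sub_mul_le_of_mem_Icc ha hb hx
  have e : secantGap f t T σ = (T * f (t - σ) - σ * f (t - T) - (T - σ) * f t) / T := by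
    rw [secantGap, backwardDiff]
    field_simp
    ring
  rw [e, abs_div, abs_of_pos hT, div_le_iff₀ hT, abs_le]
  constructor
  · linear_combination h₂
  · linear_combination h₁

end IsFL

lemma abs_backwardDiff_le_of_abs_le {η : ℝ → ℝ} {N t T : ℝ} (hT : 0 < T)
    (hη : ∀ s ∈ Icc (t - T) t, |η s| ≤ N) : |backwardDiff η t T| ≤ 2 * N / T := by
  rw [backwardDiff, abs_div, abs_of_pos hT]
  gcongr
  linarith [abs_sub (η t) (η (t - T)), hη t ⟨by linarith, le_rfl⟩,
    hη (t - T) ⟨le_rfl, by linarith⟩]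

lemma abs_secantGap_le_of_abs_le {η : ℝ → ℝ} {N t T σ : ℝ} (hT : 0 < T)
    (hσ : σ ∈ Icc 0 T) (hη : ∀ s ∈ Icc (t - T) t, |η s| ≤ N) :
    |secantGap η t T σ| ≤ 2 * N := by
  set θ := σ / T with hθ
  have hθ₀ : 0 ≤ θ := div_nonneg hσ.1 hT.le
  have hθ₁ : θ ≤ 1 := (div_le_one hT).2 hσ.2
  have hη₀ := hη (t - σ) ⟨by linarith [hσ.2], by linarith [hσ.1]⟩
  have hη₁ := hη t ⟨by linarith, le_rfl⟩
  have hη₂ := hη (t - T) ⟨le_rfl, by linarith⟩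
  have hchord : |(1 - θ) * η t + θ * η (t - T)| ≤ N := by
    calc |(1 - θ) * η t + θ * η (t - T)| ≤ (1 - θ) * |η t| + θ * |η (t - T)| := by
          refine (abs_add_le _ _).trans_eq ?_
          rw [abs_mul, abs_mul, abs_of_nonneg (sub_nonneg.2 hθ₁), abs_of_nonneg hθ₀]
      _ ≤ N := by nlinarith
  have e : secantGap η t T σ = η (t - σ) - ((1 - θ) * η t + θ * η (t - T)) := by
    rw [secantGap, backwardDiff, hθ]
    field_simp
    ring
  rw [e]
  linarith [abs_sub (η (t - σ)) ((1 - θ) * η t + θ * η (t - T))]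

section NoisySignal

variable {L N : ℝ} {Tbar : EReal} {f f' η : ℝ → ℝ} {t : ℝ}

lemma abs_backwardDiff_add_sub_le (hf : IsFL L f f') (hη : ∀ s ∈ Ici (0 : ℝ), |η s| ≤ N)
    {T : ℝ} (hT : 0 < T) (hTt : T ≤ t) :
    |backwardDiff (f + η) t T - f' t| ≤ L * T / 2 + 2 * N / T := by
  rw [backwardDiff_add, add_sub_right_comm]
  exact (abs_add_le _ _).trans (add_le_add (hf.abs_backwardDiff_sub_le hT hTt)
    (abs_backwardDiff_le_of_abs_le hT fun s hs => hη s ((sub_nonneg.2 hTt).trans hs.1)))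

lemma two_mul_mem_upperBounds_noiseSamples (hf : IsFL L f f')
    (hη : ∀ s ∈ Ici (0 : ℝ), |η s| ≤ N) :
    2 * N ∈ upperBounds (noiseSamples L Tbar (f + η) t) := by
  rintro v ⟨T, σ, hT, -, hTt, hσ₀, hσT, rfl⟩
  have hf' := hf.abs_secantGap_le hT hTt ⟨hσ₀, hσT⟩
  have hη' := abs_secantGap_le_of_abs_le hT ⟨hσ₀, hσT⟩ fun s hs =>
    hη s ((sub_nonneg.2 hTt).trans hs.1)
  rw [secantGap_add]
  linarith [abs_add_le (secantGap f t T σ) (secantGap η t T σ)]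

lemma noiseEstimate_le (hf : IsFL L f f') (hη : ∀ s ∈ Ici (0 : ℝ), |η s| ≤ N)
    (hN : 0 ≤ N) :
    noiseEstimate L Tbar (f + η) t ≤ N := by
  rw [noiseEstimate]
  have := Real.sSup_le (fun v hv => two_mul_mem_upperBounds_noiseSamples (Tbar := Tbar) (t := t)
    hf hη hv) (by linarith)
  linarith

lemma le_two_mul_noiseEstimate (hf : IsFL L f f') (hη : ∀ s ∈ Ici (0 : ℝ), |η s| ≤ N)
    {v : ℝ} (hv : v ∈ noiseSamples L Tbar (f + η) t) :
    v ≤ 2 * noiseEstimate L Tbar (f + η) t := by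
  rw [noiseEstimate]
  linarith [le_csSup ⟨2 * N, two_mul_mem_upperBounds_noiseSamples hf hη⟩ hv]

end NoisySignal

lemma half_mul_add_mul_sq_div_le {L τ T : ℝ} (hL : 0 ≤ L) (hT : 0 < T)
    (hlow : (2 - √2) * τ ≤ T) (hhigh : T ≤ (2 + √2) * τ) :
    L * T / 2 + L * τ ^ 2 / T ≤ 2 * L * τ := by
  have hroots : 2 * L * τ - (L * T / 2 + L * τ ^ 2 / T) =
      L * (T - (2 - √2) * τ) * ((2 + √2) * τ - T) / (2 * T) := by
    field_simp
    linear_combination (-(L * τ ^ 2)) * Real.sq_sqrt (zero_le_two : (0 : ℝ) ≤ 2)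
  have := div_nonneg (mul_nonneg (mul_nonneg hL (sub_nonneg.2 hlow)) (sub_nonneg.2 hhigh))
    (by positivity : (0 : ℝ) ≤ 2 * T)
  linarith

lemma EReal.coe_le_of_mul_mul_self_lt {c s : ℝ} {B : EReal} (hc : 0 < c) (hB : 0 ≤ B)
    (h : ((c * s * s : ℝ) : EReal) < c * B * B) : (s : EReal) ≤ B := by
  induction B using EReal.rec with
  | bot => exact absurd hB (by simp)
  | top => exact le_top
  | coe b =>
    have hb : 0 ≤ b := EReal.coe_nonneg.1 hB
    have h' : c * s * s < c * b * b := by exact_mod_cast h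
    exact EReal.coe_le_coe_iff.2 (lt_of_mul_self_lt_mul_self₀ hb (by nlinarith)).le

lemma eq_right_of_eq_min_of_lt {α : Type*} [LinearOrder α] {x a b : α} (h : x = min a b)
    (hx : x < a) : x = b :=
  h.trans (min_eq_right ((min_lt_iff.1 (h ▸ hx)).resolve_left (lt_irrefl a)).le)

lemma four_mul_le_mul_sq_of_eq {L M γ T : ℝ} (hL : 0 < L) (hγ : 1 ≤ γ)
    (hT : T = 2 * γ * √(M / L)) : 4 * M ≤ L * T ^ 2 := by
  rcases le_or_gt M 0 with hM | hM
  · nlinarith [sq_nonneg T]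
  rw [hT, mul_pow, Real.sq_sqrt (by positivity)]
  field_simp
  nlinarith [one_le_pow₀ (n := 2) hγ]

lemma two_mul_mul_sqrt_div_le {L M N γ : ℝ} (hL : 0 ≤ L) (hγ : γ ≤ 1 + √2)
    (hM : M ≤ N) : 2 * γ * √(M / L) ≤ (2 + √2) * √(2 * N / L) := by
  calc 2 * γ * √(M / L) ≤ 2 * (1 + √2) * √(N / L) := by gcongr
    _ = (2 + √2) * √(2 * N / L) := by
      rw [mul_div_assoc, Real.sqrt_mul zero_le_two]
      linear_combination (-√(N / L)) * Real.sq_sqrt (zero_le_two : (0 : ℝ) ≤ 2)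

theorem IsFL.abs_backwardDiff_add_sub_le_two_mul {L N τ T t : ℝ} {Tbar : EReal}
    {f f' η : ℝ → ℝ} (hf : IsFL L f f') (hη : ∀ s ∈ Ici (0 : ℝ), |η s| ≤ N)
    (hL : 0 ≤ L) (hτ : 0 < τ) (hLτ : L * τ ^ 2 = 2 * N) (hτt : τ ≤ t)
    (hτB : (τ : EReal) ≤ Tbar) (hT : 0 < T) (hTt : T ≤ t)
    (hsmall : T < τ → 4 * noiseEstimate L Tbar (f + η) t ≤ L * T ^ 2)
    (hlarge : T ≤ (2 + √2) * τ) :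
    |backwardDiff (f + η) t T - f' t| ≤ 2 * L * τ := by
  rcases lt_or_ge T τ with hTτ | hτT
  · have hsample := le_two_mul_noiseEstimate hf hη
      ⟨τ, T, hτ, hτB, hτt, hT.le, hTτ.le, rfl⟩
    have hgap : |secantGap (f + η) t τ T| / T ≤ L * τ / 2 := by
      rw [div_le_iff₀ hT]
      nlinarith [hsmall hTτ]
    have hτerr := abs_backwardDiff_add_sub_le hf hη hτ hτt
    rw [← hLτ, show L * τ ^ 2 / τ = L * τ by field_simp] at hτerr
    linarith [abs_backwardDiff_sub_le_add (f + η) t τ (f' t) hT]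
  · refine (abs_backwardDiff_add_sub_le hf hη hT hTt).trans ?_
    rw [← hLτ]
    refine half_mul_add_mul_sq_div_le hL hT ?_ hlarge
    nlinarith [Real.one_lt_sqrt_two]

theorem stmt17_general (L γbar : ℝ) (hL : 0 < L)
    (hγbar' : γbar ≤ 1 + Real.sqrt 2)
    (Tbar : EReal) (hTbar : 0 < Tbar)
    (γ : ℝ → ℝ) (hγ : ∀ t : ℝ, γ t ∈ Set.Icc 1 γbar)
    (N : ℝ) (hN : 0 < N) (hNTbar : ((2 * N : ℝ) : EReal) < (L : ℝ) * Tbar * Tbar)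
    (f f' η u : ℝ → ℝ) (hf : IsFL L f f') (hη : IsEN N η) (hu : u = f + η)
    (t : ℝ) (ht : Real.sqrt (2 * N / L) ≤ t)
    (Nhat : ℝ)
    (hNhat : Nhat = (1/2) * sSup { v : ℝ | ∃ T σ : ℝ, 0 < T ∧
        (T : EReal) ≤ Tbar ∧ T ≤ t ∧ 0 ≤ σ ∧ σ ≤ T ∧
        v = |u (t - σ) - u t + ((u t - u (t - T)) / T) * σ| - L * σ * (T - σ) / 2 })
    (That : ℝ)
    (hThat : (That : EReal) =
      min (min (t : EReal) Tbar) ((2 * γ t * Real.sqrt (Nhat / L) : ℝ) : EReal))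
    (hpos : 0 < That) :
    |(u t - u (t - That)) / That - f' t| ≤ 2 * Real.sqrt (2 * N * L) := by
  subst hu
  obtain ⟨hγ₁, hγ₂⟩ := hγ t
  set τ := √(2 * N / L)
  have hτ : 0 < τ := Real.sqrt_pos.2 (by positivity)
  have hLτ : L * τ ^ 2 = 2 * N := by
    rw [Real.sq_sqrt (by positivity)]
    field_simp
  have hNhat' : Nhat = noiseEstimate L Tbar (f + η) t := hNhat
  have hThat_t : That ≤ t := EReal.coe_le_coe_iff.1
    (hThat.trans_le ((min_le_left _ _).trans (min_le_left _ _)))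
  have hThat_le : That ≤ 2 * γ t * √(Nhat / L) := EReal.coe_le_coe_iff.1
    (hThat.trans_le (min_le_right _ _))
  have hτB : (τ : EReal) ≤ Tbar := EReal.coe_le_of_mul_mul_self_lt hL hTbar.le
    (by rwa [show L * τ * τ = 2 * N by rw [← hLτ]; ring])
  have hbound : √(2 * N * L) = L * τ := by
    rw [← Real.sqrt_sq (by positivity : 0 ≤ L * τ)]
    congr 1
    linear_combination (-L) * hLτ
  rw [hbound, ← mul_assoc]
  refine hf.abs_backwardDiff_add_sub_le_two_mul hη.2 hL.le hτ hLτ ht hτB hpos hThat_t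
    (fun hsmall => ?_) (hThat_le.trans (two_mul_mul_sqrt_div_le hL.le (by linarith)
      (hNhat' ▸ noiseEstimate_le hf hη.2 hN.le)))
  have hlt : (That : EReal) < min (t : EReal) Tbar :=
    lt_min (EReal.coe_lt_coe_iff.2 (hsmall.trans_le ht))
      ((EReal.coe_lt_coe_iff.2 hsmall).trans_le hτB)
  exact hNhat' ▸ four_mul_le_mul_sq_of_eq hL hγ₁
    (EReal.coe_eq_coe_iff.1 (eq_right_of_eq_min_of_lt hThat hlt))

theorem stmt17 (L γbar : ℝ) (hL : 0 < L)
    (hγbar : 1 ≤ γbar) (hγbar' : γbar ≤ 1 + Real.sqrt 2)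
    (Tbar : EReal) (hTbar : 0 < Tbar)
    (γ : ℝ → ℝ) (hγ : ∀ t : ℝ, γ t ∈ Set.Icc 1 γbar)
    (N : ℝ) (hN : 0 < N) (hNTbar : ((2 * N : ℝ) : EReal) < (L : ℝ) * Tbar * Tbar)
    (f f' η u : ℝ → ℝ) (hf : IsFL L f f') (hη : IsEN N η) (hu : u = f + η)
    (t : ℝ) (ht : Real.sqrt (2 * N / L) ≤ t)
    (Nhat : ℝ)
    (hNhat : Nhat = (1/2) * sSup { v : ℝ | ∃ T σ : ℝ, 0 < T ∧
        (T : EReal) ≤ Tbar ∧ T ≤ t ∧ 0 ≤ σ ∧ σ ≤ T ∧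
        v = |u (t - σ) - u t + ((u t - u (t - T)) / T) * σ| - L * σ * (T - σ) / 2 })
    (That : ℝ)
    (hThat : (That : EReal) =
      min (min (t : EReal) Tbar) ((2 * γ t * Real.sqrt (Nhat / L) : ℝ) : EReal))
    (hpos : 0 < That) :
    |(u t - u (t - That)) / That - f' t| ≤ 2 * Real.sqrt (2 * N * L) :=
  stmt17_general L γbar hL hγbar' Tbar hTbar γ hγ N hN hNTbar f f' η u hf hη hu t ht Nhat hNhat That
    hThat hpos
end
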